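/- arXiv:1803.09488 — 4 statements merged into one kernel-verified Lean document; each statement's English description precedes it below -/
import Mathlib

section
/- Under the pseudo-regression setup, assume additionally that |v(z)| ≤ A for μ-almost every z, that the conditional variance satisfies E[(V⁽¹⁾ − v(U⁽¹⁾))² | U⁽¹⁾] ≤ σ² almost surely, and that the Gram matrix G satisfies λmin‖x‖² ≤ xᵀGx ≤ λmax‖x‖² for all x ∈ ℝᴷ with 0 < λmin ≤ λmax. Then the expected L²(μ)-error of the pseudo-regression estimator satisfies E[∫_{ℝⁿ} |ṽ(z) − v(z)|² μ(dz)] ≤ (λmax/λmin)(σ² + A²)·K/M + inf over w ∈ span{ψ₁,…,ψ_K} of ∫_{ℝⁿ} |w(z) − v(z)|² μ(dz). -/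
/-!
Let `b k = ∫ ψ k * v ∂μ` and `γ₀ = G⁻¹ b`, the coefficients of the `L²(μ)`-projection of `v` onto
the span of the `ψ k`. By Pythagoras, for every coefficient vector `c` the error of `∑ c k • ψ k`
is `(c - γ₀) ⬝ G (c - γ₀)` plus the projection error, so the projection error is the infimum in
the bound. For `c = γ̃` one has `G (γ̃ - γ₀) = δ`, where `δ k` is the deviation from its mean `b k` of
the empirical mean of the i.i.d. variables `ψ k (U m) * V m`; hence the quadratic form is at most
`|δ|² / λmin`, and `E[δ k ^ 2] ≤ E[ψ k (U)² V²] / M`. Conditioning on `U`,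
`E[V² | U] = E[(V - v U)² | U] + v(U)² ≤ σ² + A²`, so `E[ψ k (U)² V²] ≤ (σ² + A²) G k k`, and
`G k k ≤ λmax`.
-/

open MeasureTheory ProbabilityTheory Matrix
open scoped ENNReal

namespace Matrix
variable {ι : Type*} [Fintype ι] {G : Matrix ι ι ℝ} {l : ℝ}

theorem dotProduct_mulVec_le_of_lower_bound (hl : 0 < l) {x : ι → ℝ}
    (hx : l * ∑ k, x k ^ 2 ≤ x ⬝ᵥ G *ᵥ x) : x ⬝ᵥ G *ᵥ x ≤ l⁻¹ * ∑ k, (G *ᵥ x) k ^ 2 := by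
  set q := x ⬝ᵥ G *ᵥ x
  have hcs : q ^ 2 ≤ (∑ k, x k ^ 2) * ∑ k, (G *ᵥ x) k ^ 2 :=
    Finset.sum_mul_sq_le_sq_mul_sq _ _ _
  have hx₀ : 0 ≤ ∑ k, x k ^ 2 := by positivity
  have hGx₀ : 0 ≤ ∑ k, (G *ᵥ x) k ^ 2 := by positivity
  rw [le_inv_mul_iff₀ hl]
  by_contra! hlt
  have hq : 0 < q := by nlinarith
  nlinarith [mul_le_mul_of_nonneg_right hx hGx₀, mul_lt_mul_of_pos_left hlt hq]

theorem isUnit_det_of_lower_bound [DecidableEq ι] (hl : 0 < l)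
    (h : ∀ x : ι → ℝ, l * ∑ k, x k ^ 2 ≤ x ⬝ᵥ G *ᵥ x) : IsUnit G.det := by
  rw [isUnit_iff_ne_zero]
  intro hdet
  obtain ⟨x, hx₀, hGx⟩ := exists_mulVec_eq_zero_iff.mpr hdet
  have hsum : ∑ k, x k ^ 2 = 0 := by
    have := h x
    rw [hGx, dotProduct_zero] at this
    exact le_antisymm (nonpos_of_mul_nonpos_right this hl) (by positivity)
  refine hx₀ (funext fun k => ?_)
  exact pow_eq_zero_iff two_ne_zero |>.mp
    ((Finset.sum_eq_zero_iff_of_nonneg fun k _ => sq_nonneg (x k)).mp hsum k (Finset.mem_univ k))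

theorem diag_le_of_upper_bound [DecidableEq ι] {u : ℝ}
    (h : ∀ x : ι → ℝ, x ⬝ᵥ G *ᵥ x ≤ u * ∑ k, x k ^ 2) (k : ι) : G k k ≤ u := by
  simpa [Pi.single_apply] using h (Pi.single k 1)

end Matrix

section L2
variable {α ι : Type*} [MeasurableSpace α] {μ : Measure α} [Fintype ι] {ψ : ι → α → ℝ}

theorem integral_add_sq_of_integral_mul_eq_zero {f g : α → ℝ} (hf : MemLp f 2 μ)
    (hg : MemLp g 2 μ) (h : ∫ z, f z * g z ∂μ = 0) :
    ∫ z, (f z + g z) ^ 2 ∂μ = ∫ z, f z ^ 2 ∂μ + ∫ z, g z ^ 2 ∂μ := by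
  have hfg : Integrable (fun z => f z * g z) μ := hf.integrable_mul hg
  have hf2g : Integrable (fun z => f z ^ 2 + 2 * (f z * g z)) μ :=
    hf.integrable_sq.add (hfg.const_mul 2)
  calc ∫ z, (f z + g z) ^ 2 ∂μ = ∫ z, (f z ^ 2 + 2 * (f z * g z)) + g z ^ 2 ∂μ := by
        congr with z; ring
    _ = ∫ z, f z ^ 2 ∂μ + ∫ z, g z ^ 2 ∂μ := by
        rw [integral_add hf2g hg.integrable_sq, integral_add hf.integrable_sq (hfg.const_mul 2),
          integral_const_mul, h, mul_zero, add_zero]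

theorem memLp_sum_mul (hψ : ∀ k, MemLp (ψ k) 2 μ) (c : ι → ℝ) :
    MemLp (fun z => ∑ k, c k * ψ k z) 2 μ :=
  memLp_finsetSum _ fun k _ => (hψ k).const_mul (c k)

theorem integral_sum_mul_mul (hψ : ∀ k, MemLp (ψ k) 2 μ) {f : α → ℝ} (hf : MemLp f 2 μ)
    (c : ι → ℝ) :
    ∫ z, (∑ k, c k * ψ k z) * f z ∂μ = ∑ k, c k * ∫ z, ψ k z * f z ∂μ := by
  have hint k : Integrable (fun z => c k * (ψ k z * f z)) μ :=
    ((hψ k).integrable_mul hf).const_mul (c k)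
  simp_rw [Finset.sum_mul, mul_assoc]
  rw [integral_finsetSum _ fun k _ => hint k]
  simp_rw [integral_const_mul]

theorem integral_sum_mul_sq (hψ : ∀ k, MemLp (ψ k) 2 μ) {G : Matrix ι ι ℝ}
    (hG : ∀ k l, G k l = ∫ z, ψ k z * ψ l z ∂μ) (c : ι → ℝ) :
    ∫ z, (∑ k, c k * ψ k z) ^ 2 ∂μ = c ⬝ᵥ G *ᵥ c := by
  simp_rw [sq, integral_sum_mul_mul hψ (memLp_sum_mul hψ c)]
  refine Finset.sum_congr rfl fun k _ => ?_
  simp_rw [mul_comm (ψ k _), integral_sum_mul_mul hψ (hψ k), mulVec, dotProduct, hG,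
    mul_comm (ψ _ _) (ψ k _), mul_comm (c _)]

theorem integral_sum_mul_sub_sq (hψ : ∀ k, MemLp (ψ k) 2 μ) {G : Matrix ι ι ℝ}
    (hG : ∀ k l, G k l = ∫ z, ψ k z * ψ l z ∂μ) {v : α → ℝ} (hv : MemLp v 2 μ) {γ : ι → ℝ}
    (hγ : G *ᵥ γ = fun k => ∫ z, ψ k z * v z ∂μ) (c : ι → ℝ) :
    ∫ z, (∑ k, c k * ψ k z - v z) ^ 2 ∂μ
      = (c - γ) ⬝ᵥ G *ᵥ (c - γ) + ∫ z, (∑ k, γ k * ψ k z - v z) ^ 2 ∂μ := by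
  have he : MemLp (fun z => ∑ k, γ k * ψ k z - v z) 2 μ := (memLp_sum_mul hψ γ).sub hv
  have horth k : ∫ z, ψ k z * (∑ l, γ l * ψ l z - v z) ∂μ = 0 := by
    have hk : (G *ᵥ γ) k = ∫ z, ψ k z * v z ∂μ := congrFun hγ k
    simp_rw [mul_sub, mul_comm (ψ k _) (∑ l, _)]
    have h₁ : Integrable (fun z => (∑ l, γ l * ψ l z) * ψ k z) μ :=
      (memLp_sum_mul hψ γ).integrable_mul (hψ k)
    have h₂ : Integrable (fun z => ψ k z * v z) μ := (hψ k).integrable_mul hv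
    rw [integral_sub h₁ h₂, integral_sum_mul_mul hψ (hψ k), ← hk]
    simp_rw [mulVec, dotProduct, hG, mul_comm (ψ k _), mul_comm (γ _)]
    exact sub_self _
  have hsplit z : ∑ k, c k * ψ k z - v z
      = ∑ k, (c - γ) k * ψ k z + (∑ k, γ k * ψ k z - v z) := by
    simp only [Pi.sub_apply, sub_mul, Finset.sum_sub_distrib]; ring
  simp_rw [hsplit]
  rw [integral_add_sq_of_integral_mul_eq_zero (memLp_sum_mul hψ _) he, integral_sum_mul_sq hψ hG]
  rw [integral_sum_mul_mul hψ he]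
  simp [horth]

theorem integral_sum_mul_sub_sq_le (hψ : ∀ k, MemLp (ψ k) 2 μ) {G : Matrix ι ι ℝ}
    (hG : ∀ k l, G k l = ∫ z, ψ k z * ψ l z ∂μ) {v : α → ℝ} (hv : MemLp v 2 μ) {l : ℝ}
    (hl : 0 < l) (hquad : ∀ x : ι → ℝ, l * ∑ k, x k ^ 2 ≤ x ⬝ᵥ G *ᵥ x) (γ : ι → ℝ) :
    ∫ z, (∑ k, γ k * ψ k z - v z) ^ 2 ∂μ
      ≤ l⁻¹ * ∑ k, ((G *ᵥ γ) k - ∫ z, ψ k z * v z ∂μ) ^ 2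
        + ⨅ c : ι → ℝ, ∫ z, (∑ k, c k * ψ k z - v z) ^ 2 ∂μ := by
  classical
  set b : ι → ℝ := fun k => ∫ z, ψ k z * v z ∂μ
  set γ₀ := G⁻¹ *ᵥ b
  have hγ₀ : G *ᵥ γ₀ = b := by
    rw [mulVec_mulVec, mul_nonsing_inv _ (isUnit_det_of_lower_bound hl hquad), one_mulVec]
  have hpyth := integral_sum_mul_sub_sq hψ hG hv hγ₀
  have hbias : ∫ z, (∑ k, γ₀ k * ψ k z - v z) ^ 2 ∂μ
      ≤ ⨅ c : ι → ℝ, ∫ z, (∑ k, c k * ψ k z - v z) ^ 2 ∂μ := by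
    refine le_ciInf fun c => ?_
    rw [hpyth c, ← integral_sum_mul_sq hψ hG]
    exact le_add_of_nonneg_left (integral_nonneg fun z => sq_nonneg _)
  have hres : G *ᵥ (γ - γ₀) = G *ᵥ γ - b := by rw [mulVec_sub, hγ₀]
  calc ∫ z, (∑ k, γ k * ψ k z - v z) ^ 2 ∂μ
      = (γ - γ₀) ⬝ᵥ G *ᵥ (γ - γ₀) + ∫ z, (∑ k, γ₀ k * ψ k z - v z) ^ 2 ∂μ := hpyth γ
    _ ≤ l⁻¹ * ∑ k, (G *ᵥ (γ - γ₀)) k ^ 2 + ⨅ c : ι → ℝ, ∫ z, (∑ k, c k * ψ k z - v z) ^ 2 ∂μ :=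
        add_le_add (dotProduct_mulVec_le_of_lower_bound hl (hquad _)) hbias
    _ = _ := by rw [hres]; rfl

end L2

section CondExp
variable {Ω : Type*} {m m₀ : MeasurableSpace Ω} {P : Measure[m₀] Ω}

/-- Unlike `condExp_mul_of_stronglyMeasurable_left`, this pull-out property needs no integrability
of the product; that is what makes `memLp_two_mul_of_condExp_sq_le` provable. -/
theorem lintegral_mul_condLExp (hm : m ≤ m₀) [SigmaFinite (P.trim hm)] {g X : Ω → ℝ≥0∞}
    (hg : Measurable[m] g) (hX : Measurable X) :
    ∫⁻ ω, g ω * P⁻[X|m] ω ∂P = ∫⁻ ω, g ω * X ω ∂P := by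
  have hcond : Measurable P⁻[X|m] := (measurable_condLExp m P X).mono hm le_rfl
  refine Measurable.ennreal_induction
    (motive := fun g => ∫⁻ ω, g ω * P⁻[X|m] ω ∂P = ∫⁻ ω, g ω * X ω ∂P) ?_ ?_ ?_ hg
  · intro c s hs
    simp only [← Set.indicator_mul_left]
    rw [lintegral_indicator (hm s hs), lintegral_indicator (hm s hs), lintegral_const_mul _ hcond,
      lintegral_const_mul _ hX, setLIntegral_condLExp hm P X hs]
  · intro f g _ hf _ hf' hg'
    have hf₀ : Measurable f := hf.mono hm le_rfl
    simp only [Pi.add_apply, add_mul]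
    rw [lintegral_add_left (by fun_prop), lintegral_add_left (by fun_prop), hf', hg']
  · intro f hf hmono hf'
    have hf₀ n : Measurable (f n) := (hf n).mono hm le_rfl
    simp only [ENNReal.iSup_mul]
    rw [lintegral_iSup (f := fun n ω => f n ω * P⁻[X|m] ω) (by fun_prop)
        fun i j hij ω => mul_le_mul_left (hmono hij ω) _,
      lintegral_iSup (f := fun n ω => f n ω * X ω) (by fun_prop)
        fun i j hij ω => mul_le_mul_left (hmono hij ω) _]
    simp only [hf']

variable [IsFiniteMeasure P]

theorem lintegral_mul_le_of_condExp_le (hm : m ≤ m₀) {g W : Ω → ℝ} (hg : Measurable[m] g)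
    (hW : Measurable W) (hWint : Integrable W P) (hW₀ : 0 ≤ᵐ[P] W) {c : ℝ}
    (hc : ∀ᵐ ω ∂P, P[W|m] ω ≤ c) :
    ∫⁻ ω, ENNReal.ofReal (g ω * W ω) ∂P ≤ ENNReal.ofReal c * ∫⁻ ω, ENNReal.ofReal (g ω) ∂P := by
  calc ∫⁻ ω, ENNReal.ofReal (g ω * W ω) ∂P
      = ∫⁻ ω, ENNReal.ofReal (g ω) * ENNReal.ofReal (W ω) ∂P := by
        refine lintegral_congr_ae ?_
        filter_upwards [hW₀] with ω hω using ENNReal.ofReal_mul' hω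
    _ = ∫⁻ ω, ENNReal.ofReal (g ω) * P⁻[fun ω => ENNReal.ofReal (W ω)|m] ω ∂P :=
        (lintegral_mul_condLExp hm hg.ennreal_ofReal hW.ennreal_ofReal).symm
    _ ≤ ∫⁻ ω, ENNReal.ofReal (g ω) * ENNReal.ofReal c ∂P := by
        refine lintegral_mono_ae ?_
        filter_upwards [condLExp_ofReal m hWint hW₀, hc] with ω hω hωc
        rw [hω]
        gcongr
    _ = ENNReal.ofReal c * ∫⁻ ω, ENNReal.ofReal (g ω) ∂P := by
        rw [lintegral_mul_const' _ _ ENNReal.ofReal_ne_top, mul_comm]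

theorem lintegral_sq_mul_le_of_condExp_sq_le (hm : m ≤ m₀) {h V : Ω → ℝ} (hh : Measurable[m] h)
    (hV : Measurable V) (hV₂ : MemLp V 2 P) {c : ℝ}
    (hc : ∀ᵐ ω ∂P, P[fun ω => V ω ^ 2|m] ω ≤ c) :
    ∫⁻ ω, ENNReal.ofReal ((h ω * V ω) ^ 2) ∂P
      ≤ ENNReal.ofReal c * ∫⁻ ω, ENNReal.ofReal (h ω ^ 2) ∂P := by
  simp_rw [mul_pow]
  exact lintegral_mul_le_of_condExp_le hm (hh.pow_const 2) (hV.pow_const 2) hV₂.integrable_sq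
    (ae_of_all _ fun ω => sq_nonneg (V ω)) hc

theorem memLp_two_mul_of_condExp_sq_le (hm : m ≤ m₀) {h V : Ω → ℝ} (hh : Measurable[m] h)
    (hh₂ : MemLp h 2 P) (hV : Measurable V) (hV₂ : MemLp V 2 P) {c : ℝ}
    (hc : ∀ᵐ ω ∂P, P[fun ω => V ω ^ 2|m] ω ≤ c) :
    MemLp (fun ω => h ω * V ω) 2 P := by
  have hhV : Measurable fun ω => h ω * V ω := (hh.mono hm le_rfl).mul hV
  refine (memLp_two_iff_integrable_sq hhV.aestronglyMeasurable).mpr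
    ⟨(hhV.pow_const 2).aestronglyMeasurable, ?_⟩
  rw [hasFiniteIntegral_iff_ofReal (ae_of_all _ fun ω => sq_nonneg _)]
  refine (lintegral_sq_mul_le_of_condExp_sq_le hm hh hV hV₂ hc).trans_lt
    (ENNReal.mul_lt_top ENNReal.ofReal_lt_top ?_)
  exact (hasFiniteIntegral_iff_ofReal (ae_of_all _ fun ω => sq_nonneg _)).mp hh₂.integrable_sq.2

theorem integral_sq_mul_le_of_condExp_sq_le (hm : m ≤ m₀) {h V : Ω → ℝ} (hh : Measurable[m] h)
    (hh₂ : MemLp h 2 P) (hV : Measurable V) (hV₂ : MemLp V 2 P) {c : ℝ} (hc₀ : 0 ≤ c)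
    (hc : ∀ᵐ ω ∂P, P[fun ω => V ω ^ 2|m] ω ≤ c) :
    ∫ ω, (h ω * V ω) ^ 2 ∂P ≤ c * ∫ ω, h ω ^ 2 ∂P := by
  have hhV₂ := memLp_two_mul_of_condExp_sq_le hm hh hh₂ hV hV₂ hc
  rw [← ENNReal.ofReal_le_ofReal_iff (mul_nonneg hc₀ (integral_nonneg fun ω => sq_nonneg _)),
    ofReal_integral_eq_lintegral_ofReal hhV₂.integrable_sq (ae_of_all _ fun ω => sq_nonneg _),
    ENNReal.ofReal_mul hc₀,
    ofReal_integral_eq_lintegral_ofReal hh₂.integrable_sq (ae_of_all _ fun ω => sq_nonneg _)]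
  exact lintegral_sq_mul_le_of_condExp_sq_le hm hh hV hV₂ hc

theorem integral_mul_eq_of_condExp_eq (hm : m ≤ m₀) {h V f : Ω → ℝ}
    (hh : StronglyMeasurable[m] h) (hhV : Integrable (fun ω => h ω * V ω) P) (hV : Integrable V P)
    (hcond : P[V|m] =ᵐ[P] f) :
    ∫ ω, h ω * V ω ∂P = ∫ ω, h ω * f ω ∂P :=
  calc ∫ ω, h ω * V ω ∂P = ∫ ω, P[h * V|m] ω ∂P := (integral_condExp hm).symm
    _ = ∫ ω, h ω * f ω ∂P := by
      refine integral_congr_ae ?_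
      filter_upwards [condExp_mul_of_stronglyMeasurable_left hh hhV hV, hcond] with ω h₁ h₂
      rw [h₁, Pi.mul_apply, h₂]

theorem condExp_sq_le_of_condVar_le (hm : m ≤ m₀) {V f : Ω → ℝ} (hV : MemLp V 2 P)
    (hf : StronglyMeasurable[m] f) {A σ : ℝ} (hfA : ∀ᵐ ω ∂P, |f ω| ≤ A)
    (hcond : P[V|m] =ᵐ[P] f) (hσ : ∀ᵐ ω ∂P, P[fun ω => (V ω - f ω) ^ 2|m] ω ≤ σ ^ 2) :
    ∀ᵐ ω ∂P, P[fun ω => V ω ^ 2|m] ω ≤ σ ^ 2 + A ^ 2 := by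
  have hf₂ : MemLp f 2 P := MemLp.of_bound (hf.mono hm).aestronglyMeasurable A
    (by filter_upwards [hfA] with ω hω using (Real.norm_eq_abs _).trans_le hω)
  have hf₁ : Integrable f P := hf₂.integrable one_le_two
  have hW : MemLp ((2 : ℝ) • V - f) 2 P := (hV.const_smul (2 : ℝ)).sub hf₂
  have hsplit : (fun ω => V ω ^ 2) = (fun ω => (V ω - f ω) ^ 2) + f * ((2 : ℝ) • V - f) := by
    ext ω; simp only [Pi.add_apply, Pi.mul_apply, Pi.sub_apply, Pi.smul_apply]; ring
  -- pulling out `f` turns the cross term into `f * E[2V - f | m] = f ^ 2`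
  have hW_cond : P[(2 : ℝ) • V - f|m] =ᵐ[P] f := by
    filter_upwards [condExp_sub ((hV.integrable one_le_two).smul (2 : ℝ)) hf₁ m,
      condExp_smul (μ := P) (2 : ℝ) V m, hcond] with ω h_sub h_smul h_V
    rw [h_sub, Pi.sub_apply, h_smul, condExp_of_stronglyMeasurable hm hf hf₁, Pi.smul_apply, h_V,
      smul_eq_mul]
    ring
  have hfW : Integrable (f * ((2 : ℝ) • V - f)) P := hf₂.integrable_mul hW
  have hVf : Integrable (fun ω => (V ω - f ω) ^ 2) P := (hV.sub hf₂).integrable_sq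
  rw [hsplit]
  filter_upwards [condExp_add hVf hfW m,
    condExp_mul_of_stronglyMeasurable_left hf hfW (hW.integrable one_le_two), hW_cond, hσ,
    hfA] with ω h_add h_pull h_W h_σ h_A
  rw [h_add, Pi.add_apply, h_pull, Pi.mul_apply, h_W]
  nlinarith [abs_le.mp h_A]

end CondExp

theorem integral_sq_mean_sub_le {Ω ι : Type*} [MeasurableSpace Ω] {P : Measure Ω}
    [IsProbabilityMeasure P] [Fintype ι] {X : ι → Ω → ℝ} (i₀ : ι) (hX : MemLp (X i₀) 2 P)
    (hind : Pairwise fun i j => IndepFun (X i) (X j) P) (hid : ∀ i, IdentDistrib (X i) (X i₀) P P) :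
    ∫ ω, ((Fintype.card ι : ℝ)⁻¹ * ∑ i, X i ω - ∫ ω, X i₀ ω ∂P) ^ 2 ∂P
      ≤ (∫ ω, X i₀ ω ^ 2 ∂P) / Fintype.card ι := by
  set n : ℝ := (Fintype.card ι : ℝ)
  have hn : 0 < n := Nat.cast_pos.mpr (Fintype.card_pos_iff.mpr ⟨i₀⟩)
  have hXi i : MemLp (X i) 2 P := (hid i).symm.memLp_snd hX
  have hS : MemLp (fun ω => ∑ i, X i ω) 2 P := memLp_finsetSum _ fun i _ => hXi i
  have hmean : ∫ ω, n⁻¹ * ∑ i, X i ω ∂P = ∫ ω, X i₀ ω ∂P := by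
    rw [integral_const_mul, integral_finsetSum _ fun i _ => (hXi i).integrable one_le_two]
    simp_rw [(hid _).integral_eq, Finset.sum_const, Finset.card_univ, nsmul_eq_mul]
    exact inv_mul_cancel_left₀ hn.ne' _
  have hvar : variance (fun ω => ∑ i, X i ω) P = n * variance (X i₀) P := by
    have := IndepFun.variance_sum (s := Finset.univ) (fun i _ => hXi i) fun i _ j _ hij => hind hij
    rw [← Finset.sum_fn, this, Finset.sum_congr rfl fun i _ => (hid i).variance_eq,
      Finset.sum_const, Finset.card_univ, nsmul_eq_mul]
  rw [← hmean, ← variance_eq_integral (hS.const_mul n⁻¹).aestronglyMeasurable.aemeasurable,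
    variance_const_mul, hvar]
  calc n⁻¹ ^ 2 * (n * variance (X i₀) P) = variance (X i₀) P / n := by field_simp
    _ ≤ (∫ ω, X i₀ ω ^ 2 ∂P) / n := by
      gcongr
      exact variance_le_expectation_sq hX.aestronglyMeasurable

theorem memLp_and_integral_sq_mean_mul_sub_le {Ω ι E : Type*} [MeasurableSpace Ω] {P : Measure Ω}
    [IsProbabilityMeasure P] [Fintype ι] [MeasurableSpace E] {μ : Measure E}
    {U : ι → Ω → E} {V : ι → Ω → ℝ} (i₀ : ι) (hU : Measurable (U i₀)) (hV : Measurable (V i₀))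
    (hindep : iIndepFun (fun i ω => (U i ω, V i ω)) P)
    (hident : ∀ i, IdentDistrib (fun ω => (U i ω, V i ω)) (fun ω => (U i₀ ω, V i₀ ω)) P P)
    (hlaw : P.map (U i₀) = μ) (hV₂ : MemLp (V i₀) 2 P) {v : E → ℝ} (hv : Measurable v)
    (hcond : P[V i₀|MeasurableSpace.comap (U i₀) inferInstance] =ᵐ[P] fun ω => v (U i₀ ω))
    {c : ℝ} (hc₀ : 0 ≤ c)
    (hc : ∀ᵐ ω ∂P, P[fun ω => V i₀ ω ^ 2|MeasurableSpace.comap (U i₀) inferInstance] ω ≤ c)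
    {g : E → ℝ} (hg : Measurable g) (hg₂ : MemLp g 2 μ) :
    MemLp (fun ω => (Fintype.card ι : ℝ)⁻¹ * ∑ i, g (U i ω) * V i ω) 2 P ∧
      ∫ ω, ((Fintype.card ι : ℝ)⁻¹ * ∑ i, g (U i ω) * V i ω - ∫ z, g z * v z ∂μ) ^ 2 ∂P
        ≤ c * (∫ z, g z ^ 2 ∂μ) / Fintype.card ι := by
  have hm := hU.comap_le
  have hgU : Measurable[MeasurableSpace.comap (U i₀) inferInstance] fun ω => g (U i₀ ω) :=
    hg.comp (comap_measurable _)
  have hgU₂ : MemLp (fun ω => g (U i₀ ω)) 2 P :=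
    (memLp_map_measure_iff hg.aestronglyMeasurable hU.aemeasurable).mp (hlaw ▸ hg₂)
  have hφ : Measurable fun p : E × ℝ => g p.1 * p.2 := (hg.comp measurable_fst).mul measurable_snd
  have hX₂ : MemLp (fun ω => g (U i₀ ω) * V i₀ ω) 2 P :=
    memLp_two_mul_of_condExp_sq_le hm hgU hgU₂ hV hV₂ hc
  have hid i : IdentDistrib (fun ω => g (U i ω) * V i ω) (fun ω => g (U i₀ ω) * V i₀ ω) P P :=
    (hident i).comp hφ
  have hind : Pairwise fun i j =>
      IndepFun (fun ω => g (U i ω) * V i ω) (fun ω => g (U j ω) * V j ω) P :=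
    fun i j hij => (hindep.indepFun hij).comp hφ hφ
  refine ⟨(memLp_finsetSum _ fun i _ => (hid i).symm.memLp_snd hX₂).const_mul _, ?_⟩
  have hmean : ∫ ω, g (U i₀ ω) * V i₀ ω ∂P = ∫ z, g z * v z ∂μ := by
    rw [integral_mul_eq_of_condExp_eq hm hgU.stronglyMeasurable (hX₂.integrable one_le_two)
      (hV₂.integrable one_le_two) hcond, ← hlaw,
      integral_map hU.aemeasurable (hg.mul hv).aestronglyMeasurable (f := fun z => g z * v z)]
  have hsq : ∫ ω, (g (U i₀ ω) * V i₀ ω) ^ 2 ∂P ≤ c * ∫ z, g z ^ 2 ∂μ := by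
    rw [← hlaw, integral_map hU.aemeasurable (hg.pow_const 2).aestronglyMeasurable
      (f := fun z => g z ^ 2)]
    exact integral_sq_mul_le_of_condExp_sq_le hm hgU hgU₂ hV hV₂ hc₀ hc
  rw [← hmean]
  exact (integral_sq_mean_sub_le i₀ hX₂ hind hid).trans (by gcongr)

theorem integral_le_of_le_mul_sum_sq_add {Ω ι : Type*} [MeasurableSpace Ω] {P : Measure Ω}
    [IsProbabilityMeasure P] [Fintype ι] {f : Ω → ℝ} {δ : ι → Ω → ℝ} {a b e : ℝ} (ha : 0 ≤ a)
    (hf₀ : ∀ ω, 0 ≤ f ω) (hδ : ∀ k, MemLp (δ k) 2 P) (he : ∀ k, ∫ ω, δ k ω ^ 2 ∂P ≤ e)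
    (hf : ∀ ω, f ω ≤ a * ∑ k, δ k ω ^ 2 + b) :
    ∫ ω, f ω ∂P ≤ a * (Fintype.card ι * e) + b := by
  have hint : Integrable (fun ω => a * ∑ k, δ k ω ^ 2) P :=
    (integrable_finsetSum _ fun k _ => (hδ k).integrable_sq).const_mul a
  calc ∫ ω, f ω ∂P ≤ ∫ ω, (a * ∑ k, δ k ω ^ 2 + b) ∂P :=
        integral_mono_of_nonneg (ae_of_all _ hf₀) (hint.add (integrable_const b)) (ae_of_all _ hf)
    _ = a * ∑ k, ∫ ω, δ k ω ^ 2 ∂P + b := by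
        rw [integral_add hint (integrable_const b), integral_const_mul,
          integral_finsetSum _ fun k _ => (hδ k).integrable_sq, integral_const, probReal_univ,
          one_smul]
    _ ≤ a * (Fintype.card ι * e) + b := by
        grw [Finset.sum_le_sum fun k _ => he k]
        simp

theorem pseudo_regression_error_bound_general
    (n K M : ℕ) (hM : 0 < M)
    (μ : Measure (Fin n → ℝ)) [IsProbabilityMeasure μ]
    (ψ : Fin K → (Fin n → ℝ) → ℝ)
    (hψmeas : ∀ k, Measurable (ψ k))
    (hψL2 : ∀ k, MemLp (ψ k) 2 μ)
    (G : Matrix (Fin K) (Fin K) ℝ)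
    (hGdef : ∀ k l, G k l = ∫ z, ψ k z * ψ l z ∂μ)
    (Ω : Type*) [MeasurableSpace Ω] (P : Measure Ω) [IsProbabilityMeasure P]
    (U : Fin M → Ω → (Fin n → ℝ)) (V : Fin M → Ω → ℝ)
    (hUmeas : ∀ m, Measurable (U m)) (hVmeas : ∀ m, Measurable (V m))
    -- the pairs (U m, V m) are independent ...
    (hindep : iIndepFun (fun m ω => (U m ω, V m ω)) P)
    -- ... and identically distributed,
    (hident : ∀ m, IdentDistrib (fun ω => (U m ω, V m ω))
      (fun ω => (U ⟨0, hM⟩ ω, V ⟨0, hM⟩ ω)) P P)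
    -- the law of U⁽¹⁾ is μ,
    (hlaw : Measure.map (U ⟨0, hM⟩) P = μ)
    (hVL2 : MemLp (V ⟨0, hM⟩) 2 P)
    -- v is (a Borel version of) the regression function E[V⁽¹⁾ | U⁽¹⁾] = v(U⁽¹⁾) a.s.
    (v : (Fin n → ℝ) → ℝ) (hvmeas : Measurable v)
    (hcond : P[(fun ω => V ⟨0, hM⟩ ω) |
        MeasurableSpace.comap (U ⟨0, hM⟩) inferInstance]
      =ᵐ[P] fun ω => v (U ⟨0, hM⟩ ω))
    (A σ lmin lmax : ℝ)
    -- |v| ≤ A μ-a.e.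
    (hA : ∀ᵐ z ∂μ, |v z| ≤ A)
    -- conditional variance bound E[(V⁽¹⁾ - v(U⁽¹⁾))² | U⁽¹⁾] ≤ σ² a.s.
    (hσ : ∀ᵐ ω ∂P, (P[(fun ω' => (V ⟨0, hM⟩ ω' - v (U ⟨0, hM⟩ ω'))^2) |
        MeasurableSpace.comap (U ⟨0, hM⟩) inferInstance]) ω ≤ σ^2)
    (hlmin : 0 < lmin)
    -- eigenvalue bounds for the Gram matrix: λmin‖x‖² ≤ xᵀGx ≤ λmax‖x‖²
    (hquad : ∀ x : Fin K → ℝ,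
      lmin * ∑ k, (x k)^2 ≤ x ⬝ᵥ G.mulVec x ∧ x ⬝ᵥ G.mulVec x ≤ lmax * ∑ k, (x k)^2)
    -- the pseudo-regression coefficients γ̃ = (1/M)·G⁻¹·𝕄ᵀ𝕐
    (γ : Ω → Fin K → ℝ)
    (hγ : ∀ ω, γ ω = (M : ℝ)⁻¹ • G⁻¹.mulVec (fun k => ∑ m, ψ k (U m ω) * V m ω))
    -- the pseudo-regression estimator ṽ = Σ γ̃_k ψ_k
    (vtil : Ω → (Fin n → ℝ) → ℝ)
    (hvtil : ∀ ω z, vtil ω z = ∑ k, γ ω k * ψ k z) :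
    ∫ ω, (∫ z, (vtil ω z - v z)^2 ∂μ) ∂P
      ≤ (lmax / lmin) * (σ^2 + A^2) * K / M
        + ⨅ c : Fin K → ℝ, ∫ z, ((∑ k, c k * ψ k z) - v z)^2 ∂μ := by
  set U₀ := U ⟨0, hM⟩
  have hU₀ : Measurable U₀ := hUmeas _
  have hvA : ∀ᵐ ω ∂P, |v (U₀ ω)| ≤ A := ae_of_ae_map hU₀.aemeasurable (hlaw ▸ hA)
  have hV₀sq := condExp_sq_le_of_condVar_le hU₀.comap_le hVL2
    (hvmeas.comp (comap_measurable U₀)).stronglyMeasurable hvA hcond hσ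
  have hδ k := memLp_and_integral_sq_mean_mul_sub_le ⟨0, hM⟩ hU₀ (hVmeas _) hindep hident hlaw
    hVL2 hvmeas hcond (by positivity) hV₀sq (hψmeas k) (hψL2 k)
  simp only [Fintype.card_fin] at hδ
  have hGkk k : ∫ z, ψ k z ^ 2 ∂μ ≤ lmax := by
    simpa only [hGdef, sq] using diag_le_of_upper_bound (fun x => (hquad x).2) k
  have hGγ ω : G *ᵥ γ ω = fun k => (M : ℝ)⁻¹ * ∑ m, ψ k (U m ω) * V m ω := by
    rw [hγ, mulVec_smul, mulVec_mulVec,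
      mul_nonsing_inv _ (isUnit_det_of_lower_bound hlmin fun x => (hquad x).1), one_mulVec]
    rfl
  have hv₂ : MemLp v 2 μ := MemLp.of_bound hvmeas.aestronglyMeasurable A
    (hA.mono fun z hz => (Real.norm_eq_abs _).trans_le hz)
  have hper ω := integral_sum_mul_sub_sq_le hψL2 hGdef hv₂ hlmin (fun x => (hquad x).1) (γ ω)
  simp only [← hvtil, hGγ] at hper
  refine (integral_le_of_le_mul_sum_sq_add (e := (σ ^ 2 + A ^ 2) * lmax / M)
    (inv_nonneg.mpr hlmin.le)
    (fun ω => integral_nonneg fun z => sq_nonneg _) (fun k => (hδ k).1.sub (memLp_const _))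
    (fun k => (hδ k).2.trans (by gcongr; exact hGkk k)) hper).trans_eq ?_
  simp only [Fintype.card_fin]
  field_simp

/-- Theorem `psth` of the paper: error bound for the
pseudo-regression estimator. -/
theorem pseudo_regression_error_bound
    (n K M : ℕ) (hn : 0 < n) (hK : 0 < K) (hM : 0 < M)
    (μ : Measure (Fin n → ℝ)) [IsProbabilityMeasure μ]
    (ψ : Fin K → (Fin n → ℝ) → ℝ)
    (hψmeas : ∀ k, Measurable (ψ k))
    (hψL2 : ∀ k, MemLp (ψ k) 2 μ)
    (G : Matrix (Fin K) (Fin K) ℝ)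
    (hGdef : ∀ k l, G k l = ∫ z, ψ k z * ψ l z ∂μ)
    (hGinv : IsUnit G.det)
    (Ω : Type*) [MeasurableSpace Ω] (P : Measure Ω) [IsProbabilityMeasure P]
    (U : Fin M → Ω → (Fin n → ℝ)) (V : Fin M → Ω → ℝ)
    (hUmeas : ∀ m, Measurable (U m)) (hVmeas : ∀ m, Measurable (V m))
    -- the pairs (U m, V m) are independent ...
    (hindep : iIndepFun (fun m ω => (U m ω, V m ω)) P)
    -- ... and identically distributed,
    (hident : ∀ m, IdentDistrib (fun ω => (U m ω, V m ω))
      (fun ω => (U ⟨0, hM⟩ ω, V ⟨0, hM⟩ ω)) P P)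
    -- the law of U⁽¹⁾ is μ,
    (hlaw : Measure.map (U ⟨0, hM⟩) P = μ)
    (hVL2 : MemLp (V ⟨0, hM⟩) 2 P)
    -- v is (a Borel version of) the regression function E[V⁽¹⁾ | U⁽¹⁾] = v(U⁽¹⁾) a.s.
    (v : (Fin n → ℝ) → ℝ) (hvmeas : Measurable v)
    (hcond : P[(fun ω => V ⟨0, hM⟩ ω) |
        MeasurableSpace.comap (U ⟨0, hM⟩) inferInstance]
      =ᵐ[P] fun ω => v (U ⟨0, hM⟩ ω))
    (A σ lmin lmax : ℝ)
    -- |v| ≤ A μ-a.e.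
    (hA : ∀ᵐ z ∂μ, |v z| ≤ A)
    -- conditional variance bound E[(V⁽¹⁾ - v(U⁽¹⁾))² | U⁽¹⁾] ≤ σ² a.s.
    (hσ : ∀ᵐ ω ∂P, (P[(fun ω' => (V ⟨0, hM⟩ ω' - v (U ⟨0, hM⟩ ω'))^2) |
        MeasurableSpace.comap (U ⟨0, hM⟩) inferInstance]) ω ≤ σ^2)
    (hlmin : 0 < lmin) (hminmax : lmin ≤ lmax)
    -- eigenvalue bounds for the Gram matrix: λmin‖x‖² ≤ xᵀGx ≤ λmax‖x‖²
    (hquad : ∀ x : Fin K → ℝ,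
      lmin * ∑ k, (x k)^2 ≤ x ⬝ᵥ G.mulVec x ∧ x ⬝ᵥ G.mulVec x ≤ lmax * ∑ k, (x k)^2)
    -- the pseudo-regression coefficients γ̃ = (1/M)·G⁻¹·𝕄ᵀ𝕐
    (γ : Ω → Fin K → ℝ)
    (hγ : ∀ ω, γ ω = (M : ℝ)⁻¹ • G⁻¹.mulVec (fun k => ∑ m, ψ k (U m ω) * V m ω))
    -- the pseudo-regression estimator ṽ = Σ γ̃_k ψ_k
    (vtil : Ω → (Fin n → ℝ) → ℝ)
    (hvtil : ∀ ω z, vtil ω z = ∑ k, γ ω k * ψ k z) :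
    ∫ ω, (∫ z, (vtil ω z - v z)^2 ∂μ) ∂P
      ≤ (lmax / lmin) * (σ^2 + A^2) * K / M
        + ⨅ c : Fin K → ℝ, ∫ z, ((∑ k, c k * ψ k z) - v z)^2 ∂μ :=
  pseudo_regression_error_bound_general n K M hM μ ψ hψmeas hψL2 G hGdef Ω P U V hUmeas hVmeas
    hindep hident hlaw hVL2 v hvmeas hcond A σ lmin lmax hA hσ hlmin hquad γ hγ vtil hvtil
end

section
/- Let N be a nonnegative random variable, σ > 0, λ > 0, r₀ ≥ 0 and α ∈ ℝ with α + r₀/(2σ) ≥ 0. Suppose that P(N > r) ≤ 1 − Φ(α + r/(2σ)) holds for all r ≥ r₀, where Φ is the standard normal cumulative distribution function. Then E[exp(λN)] ≤ exp(λr₀) + √(π/2)·σ·λ·exp(2σλ(σλ − α))·erfc( (α − 2σλ + r₀/(2σ)) / √2 ). -/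
open MeasureTheory Real

/-- The cumulative distribution function of the standard normal distribution,
`Φ(x) = (2π)^{−1/2} ∫_{−∞}^{x} e^{−t²/2} dt`. -/
noncomputable def stdNormalCDF (x : ℝ) : ℝ :=
  (Real.sqrt (2 * Real.pi))⁻¹ * ∫ t in Set.Iic x, Real.exp (-t^2 / 2)

/-- The complementary error function `erfc(x) = (2/√π) ∫_x^∞ e^{−t²} dt`. -/
noncomputable def erfc (x : ℝ) : ℝ :=
  (2 / Real.sqrt Real.pi) * ∫ t in Set.Ioi x, Real.exp (-t^2)

/-!
By the layer-cake formula, `E[e^{λN}] = 1 + ∫₀^∞ λ e^{λt} P(N > t) dt`. On `(0, r₀]` the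
probability is at most `1`, which contributes `e^{λr₀} - 1`. Beyond `r₀` the hypothesis and
the Gaussian tail bound `1 - Φ(s) ≤ e^{-s²/2} / 2` (for `s ≥ 0`) bound the integrand by
`λ e^{λt} e^{-(α + t/(2σ))²/2} / 2`. Completing the square turns this into
`(λ/2) e^{2σλ(σλ-α)} e^{-u²/2}` with `u = t/(2σ) + α - 2σλ`, so the remaining integral is a
Gaussian tail integral, which is the `erfc` term.
-/

open Set Filter

section GaussianTail

lemma integral_Ioi_comp_add_right (g : ℝ → ℝ) (a d : ℝ) :
    ∫ x in Ioi a, g (x + d) = ∫ x in Ioi (a + d), g x := by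
  rw [← integral_indicator measurableSet_Ioi, ← integral_indicator measurableSet_Ioi,
    ← integral_add_right_eq_self (μ := volume) (indicator (Ioi (a + d)) g) d]
  congr 1 with x
  simp only [indicator_apply, mem_Ioi, add_lt_add_iff_right]

lemma exp_neg_sq_div_two_eq (t : ℝ) : exp (-t ^ 2 / 2) = exp (-(1 / 2) * t ^ 2) := by
  ring_nf

lemma integrable_exp_neg_sq_div_two : Integrable fun t : ℝ => exp (-t ^ 2 / 2) := by
  simpa only [exp_neg_sq_div_two_eq] using integrable_exp_neg_mul_sq one_half_pos

lemma integral_exp_neg_sq_div_two : ∫ t, exp (-t ^ 2 / 2) = √(2 * π) := by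
  simp only [exp_neg_sq_div_two_eq, integral_gaussian, one_div, div_inv_eq_mul, mul_comm π]

lemma integral_Ioi_zero_exp_neg_sq_div_two :
    ∫ t in Ioi 0, exp (-t ^ 2 / 2) = √(2 * π) / 2 := by
  simp only [exp_neg_sq_div_two_eq, integral_gaussian_Ioi, one_div, div_inv_eq_mul, mul_comm π]

lemma one_sub_stdNormalCDF_eq (x : ℝ) :
    1 - stdNormalCDF x = (√(2 * π))⁻¹ * ∫ t in Ioi x, exp (-t ^ 2 / 2) := by
  have hsplit := intervalIntegral.integral_Iic_add_Ioi (b := x)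
    integrable_exp_neg_sq_div_two.integrableOn integrable_exp_neg_sq_div_two.integrableOn
  rw [integral_exp_neg_sq_div_two] at hsplit
  have hpos : 0 < √(2 * π) := by positivity
  rw [stdNormalCDF, eq_sub_of_add_eq hsplit, mul_sub, inv_mul_cancel₀ hpos.ne', sub_sub_cancel]

lemma one_sub_stdNormalCDF_le {s : ℝ} (hs : 0 ≤ s) :
    1 - stdNormalCDF s ≤ exp (-s ^ 2 / 2) / 2 := by
  have hshift : ∫ t in Ioi s, exp (-t ^ 2 / 2) = ∫ u in Ioi 0, exp (-(u + s) ^ 2 / 2) := by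
    rw [integral_Ioi_comp_add_right (fun t => exp (-t ^ 2 / 2)), zero_add]
  have hle : ∫ u in Ioi 0, exp (-(u + s) ^ 2 / 2)
      ≤ ∫ u in Ioi 0, exp (-s ^ 2 / 2) * exp (-u ^ 2 / 2) := by
    refine setIntegral_mono_on ?_ (integrable_exp_neg_sq_div_two.const_mul _).integrableOn
      measurableSet_Ioi fun u (hu : 0 < u) => ?_
    · exact (integrable_exp_neg_sq_div_two.comp_add_right s).integrableOn
    · rw [← exp_add, exp_le_exp]
      nlinarith [mul_nonneg hu.le hs]
  rw [one_sub_stdNormalCDF_eq, hshift]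
  calc (√(2 * π))⁻¹ * ∫ u in Ioi 0, exp (-(u + s) ^ 2 / 2)
      ≤ (√(2 * π))⁻¹ * ∫ u in Ioi 0, exp (-s ^ 2 / 2) * exp (-u ^ 2 / 2) := by gcongr
    _ = exp (-s ^ 2 / 2) / 2 := by
      have hpos : 0 < √(2 * π) := by positivity
      rw [integral_const_mul, integral_Ioi_zero_exp_neg_sq_div_two]
      field_simp

lemma sqrt_pi_div_two_mul_erfc_div_sqrt_two (x : ℝ) :
    √(π / 2) * erfc (x / √2) = ∫ t in Ioi x, exp (-t ^ 2 / 2) := by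
  have h2 : (0 : ℝ) < √2 := by positivity
  have hsubst : ∫ t in Ioi (x / √2), exp (-t ^ 2)
      = ∫ t in Ioi (x / √2), exp (-(t * √2) ^ 2 / 2) := by
    congr 1 with t
    rw [mul_pow, sq_sqrt zero_le_two]
    ring_nf
  rw [erfc, hsubst, integral_comp_mul_right_Ioi (fun u => exp (-u ^ 2 / 2)) _ h2,
    div_mul_cancel₀ _ h2.ne', smul_eq_mul, sqrt_div' π zero_le_two]
  have hpi : 0 < √π := by positivity
  field_simp
  rw [sq_sqrt zero_le_two]

end GaussianTail

section CompletingSquare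

variable {σ : ℝ} (lam α : ℝ)

lemma mul_exp_mul_mul_exp_neg_sq_eq (hσ : σ ≠ 0) (t : ℝ) :
    lam * exp (lam * t) * (exp (-(α + t / (2 * σ)) ^ 2 / 2) / 2)
      = lam / 2 * exp (2 * σ * lam * (σ * lam - α))
        * exp (-(t * (2 * σ)⁻¹ + (α - 2 * σ * lam)) ^ 2 / 2) := by
  have hexponent : lam * t + -(α + t / (2 * σ)) ^ 2 / 2
      = 2 * σ * lam * (σ * lam - α) + -(t * (2 * σ)⁻¹ + (α - 2 * σ * lam)) ^ 2 / 2 := by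
    field_simp
    ring
  calc _ = lam / 2 * exp (lam * t + -(α + t / (2 * σ)) ^ 2 / 2) := by rw [exp_add]; ring
    _ = _ := by rw [hexponent, exp_add]; ring

lemma integrableOn_mul_exp_mul_mul_exp_neg_sq (hσ : 0 < σ) (r : ℝ) :
    IntegrableOn (fun t => lam * exp (lam * t) * (exp (-(α + t / (2 * σ)) ^ 2 / 2) / 2))
      (Ioi r) := by
  simp_rw [mul_exp_mul_mul_exp_neg_sq_eq lam α hσ.ne']
  exact (((integrable_exp_neg_sq_div_two.comp_add_right _).comp_mul_right'
    (by positivity)).const_mul _).integrableOn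

lemma integral_Ioi_mul_exp_mul_mul_exp_neg_sq (hσ : 0 < σ) (r : ℝ) :
    ∫ t in Ioi r, lam * exp (lam * t) * (exp (-(α + t / (2 * σ)) ^ 2 / 2) / 2)
      = σ * lam * exp (2 * σ * lam * (σ * lam - α))
        * ∫ u in Ioi (α - 2 * σ * lam + r / (2 * σ)), exp (-u ^ 2 / 2) := by
  simp_rw [mul_exp_mul_mul_exp_neg_sq_eq lam α hσ.ne']
  rw [integral_const_mul,
    integral_comp_mul_right_Ioi (fun x => exp (-(x + (α - 2 * σ * lam)) ^ 2 / 2)) r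
      (by positivity),
    integral_Ioi_comp_add_right (fun x => exp (-x ^ 2 / 2)), smul_eq_mul, inv_inv,
    show r * (2 * σ)⁻¹ + (α - 2 * σ * lam) = α - 2 * σ * lam + r / (2 * σ) by ring]
  ring

end CompletingSquare

section ExpMoment

variable {Ω : Type*} [MeasurableSpace Ω] {P : Measure Ω} {N : Ω → ℝ} {lam : ℝ}

lemma integral_mul_exp_mul (lam x : ℝ) :
    ∫ t in (0 : ℝ)..x, lam * exp (lam * t) = exp (lam * x) - 1 := by
  have hderiv (t : ℝ) : HasDerivAt (fun u => exp (lam * u)) (lam * exp (lam * t)) t := by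
    simpa [mul_comm] using ((hasDerivAt_id t).const_mul lam).exp
  rw [intervalIntegral.integral_eq_sub_of_hasDerivAt (fun t _ => hderiv t)
    ((by fun_prop : Continuous fun t => lam * exp (lam * t)).intervalIntegrable _ _), mul_zero,
    exp_zero]

lemma lintegral_ofReal_exp_mul_eq_one_add [IsProbabilityMeasure P] (hN : Measurable N)
    (hN0 : ∀ ω, 0 ≤ N ω) (hlam : 0 ≤ lam) :
    ∫⁻ ω, ENNReal.ofReal (exp (lam * N ω)) ∂P
      = 1 + ∫⁻ t in Ioi 0, P {ω | t < N ω} * ENNReal.ofReal (lam * exp (lam * t)) := by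
  have hsplit (ω : Ω) : ENNReal.ofReal (exp (lam * N ω))
      = 1 + ENNReal.ofReal (∫ t in (0 : ℝ)..N ω, lam * exp (lam * t)) := by
    rw [integral_mul_exp_mul, ← ENNReal.ofReal_one, ← ENNReal.ofReal_add zero_le_one,
      add_sub_cancel]
    exact sub_nonneg.2 (one_le_exp (mul_nonneg hlam (hN0 ω)))
  simp_rw [hsplit]
  rw [lintegral_add_left measurable_const, lintegral_const, measure_univ, one_mul,
    lintegral_comp_eq_lintegral_meas_lt_mul P (Eventually.of_forall hN0) hN.aemeasurable
      (fun t _ => (by fun_prop : Continuous fun t => lam * exp (lam * t)).intervalIntegrable _ _)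
      (Eventually.of_forall fun t => by positivity)]

lemma setLIntegral_Ioc_meas_lt_mul_le [IsProbabilityMeasure P] (hlam : 0 ≤ lam) {r : ℝ}
    (hr : 0 ≤ r) :
    ∫⁻ t in Ioc 0 r, P {ω | t < N ω} * ENNReal.ofReal (lam * exp (lam * t))
      ≤ ENNReal.ofReal (exp (lam * r) - 1) := by
  calc ∫⁻ t in Ioc 0 r, P {ω | t < N ω} * ENNReal.ofReal (lam * exp (lam * t))
      ≤ ∫⁻ t in Ioc 0 r, ENNReal.ofReal (lam * exp (lam * t)) :=
        lintegral_mono fun t => mul_le_of_le_one_left' prob_le_one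
    _ = ENNReal.ofReal (exp (lam * r) - 1) := by
        rw [← ofReal_integral_eq_lintegral_ofReal (by fun_prop : Continuous fun t =>
            lam * exp (lam * t)).integrableOn_Ioc
          (Eventually.of_forall fun t => by positivity),
          ← intervalIntegral.integral_of_le hr, integral_mul_exp_mul]

lemma setLIntegral_Ioi_meas_lt_mul_le [IsFiniteMeasure P] (hlam : 0 ≤ lam) {r : ℝ}
    {f : ℝ → ℝ}
    (hf : IntegrableOn (fun t => lam * exp (lam * t) * f t) (Ioi r))
    (htail : ∀ t, r < t → (P {ω | t < N ω}).toReal ≤ f t) :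
    ∫⁻ t in Ioi r, P {ω | t < N ω} * ENNReal.ofReal (lam * exp (lam * t))
      ≤ ENNReal.ofReal (∫ t in Ioi r, lam * exp (lam * t) * f t) := by
  have hbound (t : ℝ) (ht : r < t) : P {ω | t < N ω} * ENNReal.ofReal (lam * exp (lam * t))
      ≤ ENNReal.ofReal (lam * exp (lam * t) * f t) := by
    rw [← ENNReal.ofReal_toReal (measure_ne_top P _),
      ← ENNReal.ofReal_mul ENNReal.toReal_nonneg, mul_comm]
    exact ENNReal.ofReal_le_ofReal (mul_le_mul_of_nonneg_left (htail t ht) (by positivity))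
  calc ∫⁻ t in Ioi r, P {ω | t < N ω} * ENNReal.ofReal (lam * exp (lam * t))
      ≤ ∫⁻ t in Ioi r, ENNReal.ofReal (lam * exp (lam * t) * f t) :=
        setLIntegral_mono_ae hf.aemeasurable.ennreal_ofReal (.of_forall hbound)
    _ = ENNReal.ofReal (∫ t in Ioi r, lam * exp (lam * t) * f t) := by
        refine (ofReal_integral_eq_lintegral_ofReal hf ?_).symm
        filter_upwards [ae_restrict_mem measurableSet_Ioi] with t ht
        exact mul_nonneg (by positivity) (ENNReal.toReal_nonneg.trans (htail t ht))

theorem integral_exp_mul_le_of_tail_le [IsProbabilityMeasure P] (hN : Measurable N)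
    (hN0 : ∀ ω, 0 ≤ N ω) (hlam : 0 ≤ lam) {r : ℝ} (hr : 0 ≤ r) {f : ℝ → ℝ}
    (hf : IntegrableOn (fun t => lam * exp (lam * t) * f t) (Ioi r))
    (htail : ∀ t, r < t → (P {ω | t < N ω}).toReal ≤ f t) :
    ∫ ω, exp (lam * N ω) ∂P ≤ exp (lam * r) + ∫ t in Ioi r, lam * exp (lam * t) * f t := by
  have hI : 0 ≤ ∫ t in Ioi r, lam * exp (lam * t) * f t :=
    setIntegral_nonneg measurableSet_Ioi fun t ht =>
      mul_nonneg (by positivity) (ENNReal.toReal_nonneg.trans (htail t ht))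
  have hexp : 1 ≤ exp (lam * r) := one_le_exp (mul_nonneg hlam hr)
  rw [integral_eq_lintegral_of_nonneg_ae (Eventually.of_forall fun ω => (exp_pos _).le)
    (by fun_prop)]
  refine ENNReal.toReal_le_of_le_ofReal (by positivity) ?_
  rw [lintegral_ofReal_exp_mul_eq_one_add hN hN0 hlam, ← Ioc_union_Ioi_eq_Ioi hr,
    lintegral_union measurableSet_Ioi (Ioc_disjoint_Ioi le_rfl)]
  calc 1 + (_ + _) ≤ 1 + (ENNReal.ofReal (exp (lam * r) - 1)
        + ENNReal.ofReal (∫ t in Ioi r, lam * exp (lam * t) * f t)) := by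
        gcongr
        exacts [setLIntegral_Ioc_meas_lt_mul_le hlam hr,
          setLIntegral_Ioi_meas_lt_mul_le hlam hf htail]
    _ = ENNReal.ofReal (exp (lam * r) + ∫ t in Ioi r, lam * exp (lam * t) * f t) := by
        rw [← ENNReal.ofReal_add (by linarith) hI, ← ENNReal.ofReal_one,
          ← ENNReal.ofReal_add zero_le_one (by linarith)]
        ring_nf

end ExpMoment

/-- exponential moment bound from a Gaussian-type tail estimate
(precise form, with the complementary error function). -/
theorem exp_moment_bound_of_gaussian_tail
    (Ω : Type*) [MeasurableSpace Ω] (P : Measure Ω) [IsProbabilityMeasure P]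
    (N : Ω → ℝ) (hNmeas : Measurable N) (hNnonneg : ∀ ω, 0 ≤ N ω)
    (σ lam r₀ α : ℝ) (hσ : 0 < σ) (hlam : 0 < lam) (hr₀ : 0 ≤ r₀)
    (hα : 0 ≤ α + r₀ / (2 * σ))
    (htail : ∀ r : ℝ, r₀ ≤ r →
      (P {ω | r < N ω}).toReal ≤ 1 - stdNormalCDF (α + r / (2 * σ))) :
    ∫ ω, Real.exp (lam * N ω) ∂P
      ≤ Real.exp (lam * r₀)
        + Real.sqrt (Real.pi / 2) * σ * lam * Real.exp (2 * σ * lam * (σ * lam - α))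
          * erfc ((α - 2 * σ * lam + r₀ / (2 * σ)) / Real.sqrt 2) := by
  have hgauss (t : ℝ) (ht : r₀ < t) :
      (P {ω | t < N ω}).toReal ≤ exp (-(α + t / (2 * σ)) ^ 2 / 2) / 2 := by
    refine (htail t ht.le).trans (one_sub_stdNormalCDF_le (hα.trans ?_))
    gcongr
  calc ∫ ω, exp (lam * N ω) ∂P
      ≤ exp (lam * r₀)
        + ∫ t in Ioi r₀, lam * exp (lam * t) * (exp (-(α + t / (2 * σ)) ^ 2 / 2) / 2) :=
        integral_exp_mul_le_of_tail_le hNmeas hNnonneg hlam.le hr₀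
          (integrableOn_mul_exp_mul_mul_exp_neg_sq lam α hσ r₀) hgauss
    _ = _ := by
        rw [integral_Ioi_mul_exp_mul_mul_exp_neg_sq lam α hσ,
          ← sqrt_pi_div_two_mul_erfc_div_sqrt_two]
        ring
end

section
/- Let A₁,…,A_d be real n×n matrices satisfying the step-2 nilpotency condition [[A_i, A_j], A_l] = 0 for all i, j, l ∈ {1,…,d}, where [A,B] := AB − BA. Let Z = (Z¹,…,Z^d) : [0,T] → ℝ^d be continuously differentiable, fix 0 ≤ t ≤ T and x ∈ ℝⁿ, and let X : [t,T] → ℝⁿ be a solution of the linear ODE dX_r/dr = Σ_{i=1}^{d} A_i X_r (dZ^i_r/dr) with X_t = x. For 1 ≤ i ≠ j ≤ d define the area a^{ij}_{t,r} := ½ ∫_t^r (Z^i_s − Z^i_t)·(dZ^j_s/ds) ds − ½ ∫_t^r (Z^j_s − Z^j_t)·(dZ^i_s/ds) ds. Then for all r ∈ [t,T]: X_r = exp( Σ_{i=1}^{d} A_i (Z^i_r − Z^i_t) − Σ_{1 ≤ i < j ≤ d} [A_i, A_j]·a^{ij}_{t,r} ) · x, where exp is the matrix exponential. -/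
/-!
Let `E r` be the exponent on the right. Every bracket `[A_i, A_j]` commutes with every `A_l`, hence
the brackets of elements of `span {A_i, [A_i, A_j]}` are central in that span. The step-2
Baker–Campbell–Hausdorff formula `e^x e^y = e^(x + y + [x, y]/2)` then gives
`e^(E s) = e^(D s) e^(E r)` with `D r = 0`, so that `d/dr e^(E r) = (E' + [E, E']/2) e^(E r)`.
The area terms are exactly what makes `E' + [E, E']/2 = Σ_i A_i dZ^i/dr`, so `r ↦ e^(E r) x`
solves the same linear ODE as `X`, with the same initial value, and uniqueness concludes.
-/

open scoped Matrix
open intervalIntegral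

open Finset Set NormedSpace

theorem linearODE_solution_unique_of_mem_Icc {E : Type*} [NormedAddCommGroup E]
    [NormedSpace ℝ E] {L : ℝ → E →L[ℝ] E} {f g : ℝ → E} {a b : ℝ}
    (hL : ContinuousOn L (Icc a b)) (hf : ∀ t ∈ Icc a b, HasDerivAt f (L t (f t)) t)
    (hg : ∀ t ∈ Icc a b, HasDerivAt g (L t (g t)) t) (ha : f a = g a) :
    EqOn f g (Icc a b) := by
  obtain ⟨K, hK⟩ := isCompact_Icc.exists_bound_of_continuousOn hL
  have hlip : ∀ t ∈ Ico a b, LipschitzOnWith K.toNNReal (L t) univ := fun t ht =>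
    ((L t).lipschitz.weaken (by
      rw [← NNReal.coe_le_coe, coe_nnnorm, Real.coe_toNNReal']
      exact (hK t (Ico_subset_Icc_self ht)).trans (le_max_left _ _))).lipschitzOnWith
  have hcont {u : ℝ → E} (hu : ∀ t ∈ Icc a b, HasDerivAt u (L t (u t)) t) :
      ContinuousOn u (Icc a b) := fun t ht => (hu t ht).continuousAt.continuousWithinAt
  exact ODE_solution_unique_of_mem_Icc_right hlip (hcont hf)
    (fun t ht => (hf t (Ico_subset_Icc_self ht)).hasDerivWithinAt) (fun _ _ => mem_univ _)
    (hcont hg) (fun t ht => (hg t (Ico_subset_Icc_self ht)).hasDerivWithinAt)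
    (fun _ _ => mem_univ _) ha

theorem Finset.sum_sum_eq_sum_sum_lt_add_sum_diag {ι M : Type*} [Fintype ι] [LinearOrder ι]
    [AddCommMonoid M] (f : ι → ι → M) :
    ∑ i, ∑ j, f i j = ∑ i, ∑ j, (if i < j then f i j + f j i else 0) + ∑ i, f i i := by
  have hsplit (i j : ι) : f i j = (if i < j then f i j else 0) + (if j < i then f i j else 0)
      + if i = j then f i j else 0 := by
    rcases lt_trichotomy i j with h | rfl | h
    · simp [h, h.not_gt, h.ne]
    · simp
    · simp [h, h.not_gt, h.ne']
  rw [sum_congr rfl fun i _ => sum_congr rfl fun j _ => hsplit i j]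
  simp only [sum_add_distrib, ite_add_zero]
  rw [sum_comm (f := fun i j => if j < i then f i j else 0)]
  simp

section Step2Exponential

attribute [local instance] LieRing.ofAssociativeRing

section Exp

variable {𝔸 : Type*} [NormedRing 𝔸] [NormedAlgebra ℝ 𝔸] [CompleteSpace 𝔸]

theorem exp_mul_eq_add_lie_mul_exp {x y : 𝔸} (hx : Commute x ⁅x, y⁆) :
    exp x * y = (y + ⁅x, y⁆) * exp x := by
  have key := linearODE_solution_unique_of_mem_Icc (a := 0) (b := 1)
    (L := fun _ => ContinuousLinearMap.mul ℝ 𝔸 x) (f := fun t => exp (t • x) * y)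
    (g := fun t => (y + t • ⁅x, y⁆) * exp (t • x)) continuousOn_const
    (fun t _ => by simpa [mul_assoc] using (hasDerivAt_exp_smul_const' x t).mul_const y)
    (fun t _ => by
      refine ((((hasDerivAt_id t).smul_const ⁅x, y⁆).const_add y).mul
        (hasDerivAt_exp_smul_const' x t)).congr_deriv ?_
      have hxy : x * y = ⁅x, y⁆ + y * x := by rw [Ring.lie_def]; abel
      simp only [ContinuousLinearMap.mul_apply', one_smul, ← mul_assoc, mul_add, mul_smul_comm,
        hxy, hx.eq, add_mul, smul_mul_assoc]
      abel)
    (by simp)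
  simpa using key ⟨zero_le_one, le_rfl⟩

theorem exp_mul_exp_eq_exp_add_lie {x y : 𝔸} (hx : Commute x ⁅x, y⁆) (hy : Commute y ⁅x, y⁆) :
    exp x * exp y = exp (x + y + (2⁻¹ : ℝ) • ⁅x, y⁆) := by
  let +nondep : NormedAlgebra ℚ 𝔸 := .restrictScalars ℚ ℝ 𝔸
  have key := linearODE_solution_unique_of_mem_Icc (a := 0) (b := 1)
    (L := fun t => ContinuousLinearMap.mul ℝ 𝔸 (x + y + t • ⁅x, y⁆))
    (f := fun t => exp (t • x) * exp (t • y))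
    (g := fun t => exp (t • (x + y)) * exp ((t ^ 2 / 2) • ⁅x, y⁆))
    ((ContinuousLinearMap.mul ℝ 𝔸).continuous.comp (by fun_prop)).continuousOn
    (fun t _ => ?_) (fun t _ => ?_) (by simp)
  · have h1 := key ⟨zero_le_one, le_rfl⟩
    simp only [one_smul] at h1
    rw [h1, ← exp_add_of_commute ((hx.add_left hy).smul_right _)]
    norm_num
  · have hconj : exp (t • x) * y = (y + t • ⁅x, y⁆) * exp (t • x) := by
      have htx : Commute (t • x) ⁅t • x, y⁆ := by
        rw [smul_lie]
        exact (hx.smul_left t).smul_right t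
      rw [exp_mul_eq_add_lie_mul_exp htx, smul_lie]
    refine ((hasDerivAt_exp_smul_const' x t).mul
      (hasDerivAt_exp_smul_const' y t)).congr_deriv ?_
    rw [← mul_assoc (exp _) y, hconj]
    simp only [ContinuousLinearMap.mul_apply', add_mul, mul_assoc]
    abel
  · have hsq : HasDerivAt (fun t : ℝ => t ^ 2 / 2) t t := by
      simpa using (hasDerivAt_pow 2 t).div_const 2
    have hC : Commute ⁅x, y⁆ (exp (t • (x + y))) :=
      ((hx.add_left hy).symm.smul_right t).exp_right
    refine ((hasDerivAt_exp_smul_const' (x + y) t).mul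
      ((hasDerivAt_exp_smul_const' ⁅x, y⁆ _).scomp t hsq)).congr_deriv ?_
    rw [mul_smul_comm, ← mul_assoc (exp _) ⁅x, y⁆, ← hC.eq]
    simp only [ContinuousLinearMap.mul_apply', Function.comp_apply, add_mul, mul_assoc,
      smul_mul_assoc]

theorem hasDerivAt_exp_of_commute_lie {M : ℝ → 𝔸} {M' : 𝔸} {r : ℝ} (hM : HasDerivAt M M' r)
    (hMs : ∀ s, Commute (M s) ⁅M s, M r⁆) (hMr : ∀ s, Commute (M r) ⁅M s, M r⁆) :
    HasDerivAt (fun s => exp (M s)) ((M' + (2⁻¹ : ℝ) • ⁅M r, M'⁆) * exp (M r)) r := by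
  set D : ℝ → 𝔸 := fun s => M s - M r - (2⁻¹ : ℝ) • ⁅M s, M r⁆
  have hlieD (s : ℝ) : ⁅D s, M r⁆ = ⁅M s, M r⁆ := by
    rw [sub_lie, sub_lie, lie_self, smul_lie, commute_iff_lie_eq.mp (hMr s).symm]
    simp
  -- by step-2 BCH, only the derivative of `exp` at `0` is needed
  have hsplit (s : ℝ) : exp (M s) = exp (D s) * exp (M r) := by
    have hDs : Commute (D s) ⁅D s, M r⁆ := by
      rw [hlieD]
      exact ((hMs s).sub_left (hMr s)).sub_left ((Commute.refl _).smul_left _)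
    have hMr' : Commute (M r) ⁅D s, M r⁆ := by
      rw [hlieD]
      exact hMr s
    rw [exp_mul_exp_eq_exp_add_lie hDs hMr', hlieD]
    congr 1
    simp only [D]
    abel
  have hD : HasDerivAt D (M' - (2⁻¹ : ℝ) • ⁅M', M r⁆) r := by
    simp only [D, Ring.lie_def]
    exact (hM.sub_const (M r)).sub
      (((hM.mul_const (M r)).fun_sub (hM.const_mul (M r))).fun_const_smul _)
  have hexpD : HasDerivAt (fun s => exp (D s)) (M' - (2⁻¹ : ℝ) • ⁅M', M r⁆) r := by
    have hD0 : D r = 0 := by simp [D]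
    simpa using (hD0 ▸ hasFDerivAt_exp_zero (𝕂 := ℝ) (𝔸 := 𝔸)).comp_hasDerivAt r hD
  rw [funext hsplit, ← lie_skew, smul_neg, ← sub_eq_add_neg]
  exact hexpD.mul_const _

end Exp

section Step2

variable {R ι 𝔸 : Type*} [CommRing R] [Ring 𝔸] [Algebra R 𝔸]

def IsStep2Nilpotent (B : ι → 𝔸) : Prop :=
  ∀ i j l, ⁅⁅B i, B j⁆, B l⁆ = 0

theorem lie_sum_smul_sum_smul [Fintype ι] (B : ι → 𝔸) (a b : ι → R) :
    ⁅∑ i, a i • B i, ∑ j, b j • B j⁆ = ∑ i, ∑ j, (a i * b j) • ⁅B i, B j⁆ := by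
  rw [sum_lie]
  refine sum_congr rfl fun i _ => ?_
  rw [smul_lie, lie_sum, smul_sum]
  refine sum_congr rfl fun j _ => ?_
  rw [lie_smul (R := R), smul_smul]

namespace IsStep2Nilpotent

variable {B : ι → 𝔸} (hB : IsStep2Nilpotent B)
include hB

theorem commute_lie (i j l : ι) : Commute ⁅B i, B j⁆ (B l) :=
  commute_iff_lie_eq.mpr (hB i j l)

theorem commute_lie_lie (i j k l : ι) : Commute ⁅B i, B j⁆ ⁅B k, B l⁆ := by
  rw [Ring.lie_def (B k)]
  exact ((hB.commute_lie i j k).mul_right (hB.commute_lie i j l)).sub_right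
    ((hB.commute_lie i j l).mul_right (hB.commute_lie i j k))

variable [Fintype ι]

theorem commute_sum_lie_sum (w : ι → ι → R) (a : ι → R) :
    Commute (∑ i, ∑ j, w i j • ⁅B i, B j⁆) (∑ l, a l • B l) :=
  .sum_left _ _ _ fun i _ => .sum_left _ _ _ fun j _ => .sum_right _ _ _ fun l _ =>
    ((hB.commute_lie i j l).smul_left _).smul_right _

theorem commute_sum_lie_sum_lie (w v : ι → ι → R) :
    Commute (∑ i, ∑ j, w i j • ⁅B i, B j⁆) (∑ k, ∑ l, v k l • ⁅B k, B l⁆) :=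
  .sum_left _ _ _ fun i _ => .sum_left _ _ _ fun j _ => .sum_right _ _ _ fun k _ =>
    .sum_right _ _ _ fun l _ => ((hB.commute_lie_lie i j k l).smul_left _).smul_right _

theorem commute_sub_sum_lie (a : ι → R) (w c : ι → ι → R) :
    Commute (∑ i, a i • B i - ∑ i, ∑ j, w i j • ⁅B i, B j⁆) (∑ i, ∑ j, c i j • ⁅B i, B j⁆) :=
  ((hB.commute_sum_lie_sum c a).symm.sub_left (hB.commute_sum_lie_sum_lie w c))

theorem lie_sub_sum_lie (a b : ι → R) (w v : ι → ι → R) :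
    ⁅∑ i, a i • B i - ∑ i, ∑ j, w i j • ⁅B i, B j⁆, ∑ i, b i • B i - ∑ i, ∑ j, v i j • ⁅B i, B j⁆⁆
      = ∑ i, ∑ j, (a i * b j) • ⁅B i, B j⁆ := by
  rw [sub_lie, lie_sub, lie_sub, commute_iff_lie_eq.mp (hB.commute_sum_lie_sum v a).symm,
    commute_iff_lie_eq.mp (hB.commute_sum_lie_sum w b),
    commute_iff_lie_eq.mp (hB.commute_sum_lie_sum_lie w v), lie_sum_smul_sum_smul]
  abel

end IsStep2Nilpotent

variable [Fintype ι] [LinearOrder ι]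

theorem sum_smul_lie_eq_sum_lt (B : ι → 𝔸) (c : ι → ι → R) :
    ∑ i, ∑ j, c i j • ⁅B i, B j⁆ = ∑ i, ∑ j, (if i < j then c i j - c j i else 0) • ⁅B i, B j⁆ := by
  rw [Finset.sum_sum_eq_sum_sum_lt_add_sum_diag]
  simp only [lie_self, smul_zero, sum_const_zero, add_zero]
  refine sum_congr rfl fun i _ => sum_congr rfl fun j _ => ?_
  split_ifs
  · rw [← lie_skew (B j) (B i), smul_neg, sub_smul, sub_eq_add_neg]
  · simp

end Step2

section Magnus

variable {ι 𝔸 : Type*} {Z : ι → ℝ → ℝ}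

noncomputable def levyArea (Z : ι → ℝ → ℝ) (t r : ℝ) (i j : ι) : ℝ :=
  (1 / 2 : ℝ) * (∫ s in t..r, (Z i s - Z i t) * deriv (Z j) s)
    - (1 / 2 : ℝ) * (∫ s in t..r, (Z j s - Z j t) * deriv (Z i) s)

theorem hasDerivAt_levyArea (hZ : ∀ i, ContDiff ℝ 1 (Z i)) (t r : ℝ) (i j : ι) :
    HasDerivAt (fun r => levyArea Z t r i j)
      (2⁻¹ * ((Z i r - Z i t) * deriv (Z j) r - (Z j r - Z j t) * deriv (Z i) r)) r := by
  have hint (k l : ι) : HasDerivAt (fun r => ∫ s in t..r, (Z k s - Z k t) * deriv (Z l) s)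
      ((Z k r - Z k t) * deriv (Z l) r) r :=
    ((((hZ k).continuous.sub continuous_const).mul
      ((hZ l).continuous_deriv le_rfl)).integral_hasStrictDerivAt t r).hasDerivAt
  exact (((hint i j).const_mul _).sub ((hint j i).const_mul _)).congr_deriv (by ring)

variable [Fintype ι] [LinearOrder ι]

/-- The Magnus expansion of `dΦ = (Σ_i B_i dZ^i) Φ` truncated after its second term. -/
noncomputable def magnusExponent [Ring 𝔸] [Algebra ℝ 𝔸] (B : ι → 𝔸) (Z : ι → ℝ → ℝ) (t r : ℝ) :
    𝔸 :=
  ∑ i, (Z i r - Z i t) • B i - ∑ i, ∑ j, (if i < j then levyArea Z t r i j else 0) • ⁅B i, B j⁆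

theorem magnusExponent_self [Ring 𝔸] [Algebra ℝ 𝔸] (B : ι → 𝔸) (t : ℝ) :
    magnusExponent B Z t t = 0 := by
  simp [magnusExponent, levyArea]

variable [NormedRing 𝔸] [NormedAlgebra ℝ 𝔸] {B : ι → 𝔸}

theorem hasDerivAt_magnusExponent (hZ : ∀ i, ContDiff ℝ 1 (Z i)) (t r : ℝ) :
    HasDerivAt (magnusExponent B Z t) (∑ i, deriv (Z i) r • B i - ∑ i, ∑ j,
      (if i < j then 2⁻¹ * ((Z i r - Z i t) * deriv (Z j) r - (Z j r - Z j t) * deriv (Z i) r)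
        else 0) • ⁅B i, B j⁆) r := by
  have hZd (i : ι) : HasDerivAt (Z i) (deriv (Z i) r) r :=
    ((hZ i).differentiable one_ne_zero r).hasDerivAt
  refine (HasDerivAt.fun_sum fun i _ => ((hZd i).sub_const _).smul_const (B i)).sub
    (HasDerivAt.fun_sum fun i _ => HasDerivAt.fun_sum fun j _ => HasDerivAt.smul_const ?_ _)
  split_ifs
  · exact hasDerivAt_levyArea hZ t r i j
  · exact hasDerivAt_const _ _

theorem hasDerivAt_exp_magnusExponent [CompleteSpace 𝔸] (hB : IsStep2Nilpotent B)
    (hZ : ∀ i, ContDiff ℝ 1 (Z i)) (t r : ℝ) :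
    HasDerivAt (fun r => exp (magnusExponent B Z t r))
      ((∑ i, deriv (Z i) r • B i) * exp (magnusExponent B Z t r)) r := by
  have hlie (s : ℝ) : ⁅magnusExponent B Z t s, magnusExponent B Z t r⁆
      = ∑ i, ∑ j, ((Z i s - Z i t) * (Z j r - Z j t)) • ⁅B i, B j⁆ :=
    hB.lie_sub_sum_lie _ _ _ _
  refine (hasDerivAt_exp_of_commute_lie (hasDerivAt_magnusExponent hZ t r) (fun s => ?_)
    (fun s => ?_)).congr_deriv ?_
  · rw [hlie]
    exact hB.commute_sub_sum_lie _ _ _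
  · rw [hlie]
    exact hB.commute_sub_sum_lie _ _ _
  · rw [magnusExponent, hB.lie_sub_sum_lie,
      sum_smul_lie_eq_sum_lt B fun i j => (Z i r - Z i t) * deriv (Z j) r]
    simp only [smul_sum, smul_smul, mul_ite, mul_zero, sub_add_cancel]

end Magnus

end Step2Exponential

theorem linear_ode_solution_step2_nilpotent_general
    (n d : ℕ) (T t : ℝ)
    (A : Fin d → Matrix (Fin n) (Fin n) ℝ)
    -- step-2 nilpotency: [[A_i, A_j], A_l] = 0 for all i, j, l
    (hnil : ∀ i j l : Fin d,
      (A i * A j - A j * A i) * A l - A l * (A i * A j - A j * A i) = 0)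
    (Z : Fin d → ℝ → ℝ) (hZ : ∀ i, ContDiff ℝ 1 (Z i))
    (x : Fin n → ℝ) (X : ℝ → Fin n → ℝ)
    (hXt : X t = x)
    -- X solves dX_r = Σ_i A_i X_r dZ^i_r on [t, T]
    (hX : ∀ r ∈ Set.Icc t T,
      HasDerivAt X (∑ i, deriv (Z i) r • (A i).mulVec (X r)) r) :
    ∀ r ∈ Set.Icc t T,
      X r = (NormedSpace.exp
        (∑ i, (Z i r - Z i t) • A i
          - ∑ i, ∑ j, if i < j then
              ((1 / 2 : ℝ) * (∫ s in t..r, (Z i s - Z i t) * deriv (Z j) s)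
                - (1 / 2 : ℝ) * (∫ s in t..r, (Z j s - Z j t) * deriv (Z i) s))
              • (A i * A j - A j * A i)
            else 0)).mulVec x := by
  -- `Matrix` carries no global norm, so the analysis takes place in `(Fin n → ℝ) →L[ℝ] (Fin n → ℝ)`.
  set ψ : Matrix (Fin n) (Fin n) ℝ ≃ₐ[ℝ] ((Fin n → ℝ) →L[ℝ] (Fin n → ℝ)) :=
    Matrix.toLinAlgEquiv'.trans (Module.End.toContinuousLinearMap _)
  have hψ (M : Matrix (Fin n) (Fin n) ℝ) (v : Fin n → ℝ) : ψ M v = M *ᵥ v := by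
    simp [ψ, Module.End.toContinuousLinearMap, Matrix.toLinAlgEquiv'_apply]
  set B : Fin d → (Fin n → ℝ) →L[ℝ] (Fin n → ℝ) := fun i => ψ (A i)
  have hB : IsStep2Nilpotent B := fun i j l => by
    simpa [B, Ring.lie_def] using congrArg ψ (hnil i j l)
  have hsol : EqOn X (fun s => exp (magnusExponent B Z t s) x) (Icc t T) := by
    refine linearODE_solution_unique_of_mem_Icc (L := fun s => ∑ i, deriv (Z i) s • B i)
      (continuous_finsetSum _ fun i _ =>
        ((hZ i).continuous_deriv le_rfl).smul continuous_const).continuousOn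
      (fun s hs => by simpa [B, hψ] using hX s hs) (fun s _ => ?_)
      (by simp [hXt, magnusExponent_self])
    simpa using (hasDerivAt_exp_magnusExponent hB hZ t s).clm_apply (hasDerivAt_const s x)
  intro r hr
  have hψexp (M : Matrix (Fin n) (Fin n) ℝ) : ψ (exp M) = exp (ψ M) :=
    open scoped Matrix.Norms.Operator in
    map_exp ψ ψ.toLinearMap.continuous_of_finiteDimensional M
  rw [hsol hr, ← hψ, hψexp]
  simp [magnusExponent, levyArea, B, Ring.lie_def, apply_ite ψ]

/-- Lemma `lem:linear-rde-solution-nilpotent` of the paper, smooth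
case: explicit solution of a linear ODE with step-2 nilpotent coefficient matrices. -/
theorem linear_ode_solution_step2_nilpotent
    (n d : ℕ) (T t : ℝ) (ht : 0 ≤ t) (htT : t ≤ T)
    (A : Fin d → Matrix (Fin n) (Fin n) ℝ)
    -- step-2 nilpotency: [[A_i, A_j], A_l] = 0 for all i, j, l
    (hnil : ∀ i j l : Fin d,
      (A i * A j - A j * A i) * A l - A l * (A i * A j - A j * A i) = 0)
    (Z : Fin d → ℝ → ℝ) (hZ : ∀ i, ContDiff ℝ 1 (Z i))
    (x : Fin n → ℝ) (X : ℝ → Fin n → ℝ)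
    (hXt : X t = x)
    -- X solves dX_r = Σ_i A_i X_r dZ^i_r on [t, T]
    (hX : ∀ r ∈ Set.Icc t T,
      HasDerivAt X (∑ i, deriv (Z i) r • (A i).mulVec (X r)) r) :
    ∀ r ∈ Set.Icc t T,
      X r = (NormedSpace.exp
        (∑ i, (Z i r - Z i t) • A i
          - ∑ i, ∑ j, if i < j then
              ((1 / 2 : ℝ) * (∫ s in t..r, (Z i s - Z i t) * deriv (Z j) s)
                - (1 / 2 : ℝ) * (∫ s in t..r, (Z j s - Z j t) * deriv (Z i) s))
              • (A i * A j - A j * A i)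
            else 0)).mulVec x :=
  linear_ode_solution_step2_nilpotent_general n d T t A hnil Z hZ x X hXt hX
end

section
/- Let T > 0, p ∈ [2,3), α > 0, and let ω be a control function on [0,T]. Let Z : [0,T] → ℝ^e and y : [0,T] → ℝⁿ satisfy |Z_t − Z_s| ≤ ω(s,t)^{1/p} and |y_t − y_s| ≤ ω(s,t)^{1/p} for all 0 ≤ s ≤ t ≤ T. Let V : ℝⁿ → L(ℝ^e, ℝⁿ) be Lipschitz with Lipschitz constant at most 1 (in operator norm), and define R_{s,t} := (y_t − y_s) − V(y_s)(Z_t − Z_s). Suppose there exists c ≥ 0 such that |R_{s,t}| ≤ c·ω(s,t)^{2/p} whenever ω(s,t) ≤ α. Then for all 0 ≤ s ≤ t ≤ T one has |R_{s,t}| ≤ (c + 1)·(N_α(ω; [0,T]) + 2)·ω(s,t)^{2/p}. -/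
/-!
Clamping the greedy times of `[0,T]` to `[s,t]` cuts `[s,t]` into `N_α(ω;[0,T]) + 1` pieces of
`ω`-size at most `α`, on each of which the local bound applies. The remainder is additive up
to the cross term `(V(y_u) - V(y_s)) Z_{u,v}`, which the Lipschitz bound on `V` and the Hölder
bounds on `y` and `Z` control by `ω(s,t)^{2/p}`; summing over the pieces gives the claim.
-/

open Set

/-- A control function on `[0,T]`: continuous on the triangle
`{(s,t) : 0 ≤ s ≤ t ≤ T}`, nonnegative, vanishing on the diagonal, and
superadditive. -/
def IsControl (T : ℝ) (ω : ℝ → ℝ → ℝ) : Prop :=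
  ContinuousOn (fun p : ℝ × ℝ => ω p.1 p.2)
      {p : ℝ × ℝ | 0 ≤ p.1 ∧ p.1 ≤ p.2 ∧ p.2 ≤ T} ∧
    (∀ s t, 0 ≤ s → s ≤ t → t ≤ T → 0 ≤ ω s t) ∧
    (∀ t ∈ Set.Icc (0 : ℝ) T, ω t t = 0) ∧
    ∀ s u t, 0 ≤ s → s ≤ u → u ≤ t → t ≤ T → ω s u + ω u t ≤ ω s t

/-- The greedy sequence of times `τ₀ = s`,
`τ_{i+1} = inf{u ∈ (τ_i, t) : ω(τ_i, u) ≥ α} ∧ t` associated to a control `ω`. -/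
noncomputable def greedyTau (ω : ℝ → ℝ → ℝ) (α s t : ℝ) : ℕ → ℝ
  | 0 => s
  | i + 1 => sInf ({u : ℝ | greedyTau ω α s t i < u ∧ u < t ∧
      α ≤ ω (greedyTau ω α s t i) u} ∪ {t})

/-- `N_α(ω; [s,t]) = max{n : τ_n < t}`, the greedy count of subintervals of
`ω`-size `α` covering `[s,t]`. -/
noncomputable def greedyN (ω : ℝ → ℝ → ℝ) (α s t : ℝ) : ℕ :=
  sSup {n : ℕ | greedyTau ω α s t n < t}

open Filter Topology

noncomputable def hittingTime (f : ℝ → ℝ) (α a t : ℝ) : ℝ :=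
  sInf ({u : ℝ | a < u ∧ u < t ∧ α ≤ f u} ∪ {t})

section hittingTime

variable {f : ℝ → ℝ} {α a t : ℝ}

lemma bddBelow_hittingSet :
    BddBelow ({u : ℝ | a < u ∧ u < t ∧ α ≤ f u} ∪ {t}) := by
  refine ⟨min a t, ?_⟩
  rintro u (⟨hau, -, -⟩ | rfl)
  exacts [min_le_of_left_le hau.le, min_le_right _ _]

lemma hittingTime_le_of_mem {u : ℝ} (hau : a < u) (hut : u < t) (hfu : α ≤ f u) :
    hittingTime f α a t ≤ u :=
  csInf_le bddBelow_hittingSet (Or.inl ⟨hau, hut, hfu⟩)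

lemma hittingTime_le : hittingTime f α a t ≤ t :=
  csInf_le bddBelow_hittingSet (Or.inr rfl)

lemma le_hittingTime (hat : a ≤ t) : a ≤ hittingTime f α a t := by
  refine le_csInf ⟨t, Or.inr rfl⟩ ?_
  rintro u (⟨hau, -, -⟩ | rfl)
  exacts [hau.le, hat]

lemma apply_hittingTime_le (hf : ContinuousOn f (Icc a t)) (hat : a ≤ t) (hfa : f a ≤ α) :
    f (hittingTime f α a t) ≤ α := by
  set b := hittingTime f α a t
  by_contra! hαb
  have hab : a < b :=
    (le_hittingTime hat).lt_of_ne fun h => hαb.not_ge (by rwa [show b = a from h.symm])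
  have hab_near : ∀ᶠ u in 𝓝[<] b, u ∈ Ioo a b := Ioo_mem_nhdsLT hab
  have hfb : ∀ᶠ u in 𝓝[<] b, α < f u := by
    rw [← nhdsWithin_Ioo_eq_nhdsLT hab]
    exact ((hf b ⟨hab.le, hittingTime_le⟩).mono
      (Ioo_subset_Icc_self.trans (Icc_subset_Icc_right hittingTime_le))).eventually
      (lt_mem_nhds hαb)
  obtain ⟨u, ⟨hau, hub⟩, hfu⟩ := hab_near.and hfb |>.exists
  exact (hittingTime_le_of_mem hau (hub.trans_le hittingTime_le) hfu.le).not_gt hub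

lemma le_apply_hittingTime (hf : ContinuousOn f (Icc a t)) (hat : a ≤ t)
    (hbt : hittingTime f α a t < t) : α ≤ f (hittingTime f α a t) := by
  set b := hittingTime f α a t
  by_contra! hαb
  have hfb : ∀ᶠ u in 𝓝[≥] b, f u < α := by
    rw [← nhdsWithin_Icc_eq_nhdsGE hbt]
    exact ((hf b ⟨le_hittingTime hat, hbt.le⟩).mono
      (Icc_subset_Icc_left (le_hittingTime hat))).eventually (gt_mem_nhds hαb)
  obtain ⟨v, hbv, hv⟩ := mem_nhdsGE_iff_exists_Ico_subset.1 hfb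
  obtain ⟨u, hu, hub⟩ := exists_lt_of_csInf_lt ⟨t, Or.inr rfl⟩ (lt_min hbv hbt)
  have hbu : b ≤ u := csInf_le bddBelow_hittingSet hu
  rcases hu with ⟨-, -, hfu⟩ | hut
  · exact (hv ⟨hbu, hub.trans_le (min_le_left _ _)⟩).not_ge hfu
  · exact (min_le_right v t).not_gt (mem_singleton_iff.1 hut ▸ hub)

end hittingTime

namespace IsControl

variable {T : ℝ} {ω : ℝ → ℝ → ℝ}

lemma nonneg (hω : IsControl T ω) {s t : ℝ} (hs : 0 ≤ s) (hst : s ≤ t) (htT : t ≤ T) :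
    0 ≤ ω s t :=
  hω.2.1 s t hs hst htT

lemma apply_self (hω : IsControl T ω) {t : ℝ} (ht : 0 ≤ t) (htT : t ≤ T) : ω t t = 0 :=
  hω.2.2.1 t ⟨ht, htT⟩

lemma add_le (hω : IsControl T ω) {s u t : ℝ} (hs : 0 ≤ s) (hsu : s ≤ u) (hut : u ≤ t)
    (htT : t ≤ T) : ω s u + ω u t ≤ ω s t :=
  hω.2.2.2 s u t hs hsu hut htT

lemma mono (hω : IsControl T ω) {a b c d : ℝ} (ha : 0 ≤ a) (hab : a ≤ b) (hbc : b ≤ c)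
    (hcd : c ≤ d) (hdT : d ≤ T) : ω b c ≤ ω a d := by
  have h₁ := hω.add_le ha hab hbc (hcd.trans hdT)
  have h₂ := hω.add_le ha (hab.trans hbc) hcd hdT
  have h₃ := hω.nonneg ha hab (hbc.trans <| hcd.trans hdT)
  have h₄ := hω.nonneg (ha.trans <| hab.trans hbc) hcd hdT
  linarith

lemma continuousOn_right (hω : IsControl T ω) {a : ℝ} (ha : 0 ≤ a) :
    ContinuousOn (ω a) (Icc a T) :=
  hω.1.comp (f := fun u => (a, u)) (by fun_prop) fun _ hu => ⟨ha, hu.1, hu.2⟩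

/-- Clamping to `[s, t]` does not increase `ω`: either both ends land on the same point, or
the clamped interval lies inside `[x, x']`. -/
lemma apply_clamp_le (hω : IsControl T ω) {s t x x' : ℝ} (hs : 0 ≤ s) (hst : s ≤ t)
    (htT : t ≤ T) (hx : 0 ≤ x) (hxx' : x ≤ x') (hx'T : x' ≤ T) :
    ω (max s (min x t)) (max s (min x' t)) ≤ ω x x' := by
  have hle : max s (min x t) ≤ max s (min x' t) := by gcongr
  rcases hle.eq_or_lt with heq | hlt
  · rw [heq, hω.apply_self (hs.trans (le_max_left _ _)) (max_le (hst.trans htT)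
      ((min_le_right _ _).trans htT))]
    exact hω.nonneg hx hxx' hx'T
  · have hxl : x ≤ max s (min x t) := by
      by_contra! h
      simp only [max_def, min_def] at h hlt
      split_ifs at h hlt <;> linarith
    have hrx' : max s (min x' t) ≤ x' := by
      by_contra! h
      simp only [max_def, min_def] at h hlt
      split_ifs at h hlt <;> linarith
    exact hω.mono hx hxl hle hrx' hx'T

end IsControl

section greedy

variable {T α a b : ℝ} {ω : ℝ → ℝ → ℝ}

lemma greedyTau_succ (i : ℕ) :
    greedyTau ω α a b (i + 1) =
      hittingTime (ω (greedyTau ω α a b i)) α (greedyTau ω α a b i) b :=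
  rfl

lemma greedyTau_le (hab : a ≤ b) : ∀ i, greedyTau ω α a b i ≤ b
  | 0 => hab
  | _ + 1 => hittingTime_le

lemma greedyTau_monotone (hab : a ≤ b) : Monotone (greedyTau ω α a b) :=
  monotone_nat_of_le_succ fun i => le_hittingTime (greedyTau_le hab i)

lemma le_greedyTau (hab : a ≤ b) (i : ℕ) : a ≤ greedyTau ω α a b i :=
  greedyTau_monotone hab (Nat.zero_le i)

variable (hω : IsControl T ω) (ha : 0 ≤ a) (hab : a ≤ b) (hbT : b ≤ T)
include hω ha hab hbT

lemma continuousOn_greedyTau (i : ℕ) :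
    ContinuousOn (ω (greedyTau ω α a b i)) (Icc (greedyTau ω α a b i) b) :=
  (hω.continuousOn_right (ha.trans (le_greedyTau hab i))).mono (Icc_subset_Icc_right hbT)

lemma apply_greedyTau_succ_le (hα : 0 ≤ α) (i : ℕ) :
    ω (greedyTau ω α a b i) (greedyTau ω α a b (i + 1)) ≤ α := by
  rw [greedyTau_succ]
  refine apply_hittingTime_le (continuousOn_greedyTau hω ha hab hbT i) (greedyTau_le hab i) ?_
  rw [hω.apply_self (ha.trans (le_greedyTau hab i)) ((greedyTau_le hab i).trans hbT)]
  exact hα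

lemma le_apply_greedyTau_succ {i : ℕ} (hi : greedyTau ω α a b (i + 1) < b) :
    α ≤ ω (greedyTau ω α a b i) (greedyTau ω α a b (i + 1)) := by
  rw [greedyTau_succ] at hi ⊢
  exact le_apply_hittingTime (continuousOn_greedyTau hω ha hab hbT i) (greedyTau_le hab i) hi

lemma mul_le_apply_greedyTau {n : ℕ} (hn : greedyTau ω α a b n < b) :
    n * α ≤ ω a (greedyTau ω α a b n) := by
  induction n with
  | zero => simp [greedyTau, hω.apply_self ha (hab.trans hbT)]
  | succ n ih =>
    have hmono := greedyTau_monotone (ω := ω) (α := α) hab (Nat.le_succ n)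
    have hsplit := hω.add_le ha (le_greedyTau hab n) hmono (hn.le.trans hbT)
    have hgap := le_apply_greedyTau_succ hω ha hab hbT hn
    push_cast
    linarith [ih (hmono.trans_lt hn)]

lemma greedyTau_greedyN_succ (hα : 0 < α) :
    greedyTau ω α a b (greedyN ω α a b + 1) = b := by
  have hbdd : BddAbove {n : ℕ | greedyTau ω α a b n < b} := by
    refine ⟨⌊ω a b / α⌋₊, fun n hn => Nat.le_floor ((le_div_iff₀ hα).2 ?_)⟩
    exact (mul_le_apply_greedyTau hω ha hab hbT hn).trans
      (hω.mono ha le_rfl (le_greedyTau hab n) (greedyTau_le hab n) hbT)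
  refine (greedyTau_le hab _).antisymm (not_lt.1 fun h => ?_)
  exact (le_csSup hbdd h).not_gt (Nat.lt_succ_self _)

end greedy

lemma IsControl.exists_chain_apply_le {T α : ℝ} {ω : ℝ → ℝ → ℝ} (hω : IsControl T ω)
    (hα : 0 < α) {s t : ℝ} (hs : 0 ≤ s) (hst : s ≤ t) (htT : t ≤ T) :
    ∃ σ : ℕ → ℝ, σ 0 = s ∧ σ (greedyN ω α 0 T + 1) = t ∧ Monotone σ ∧
      (∀ i, σ i ∈ Icc s t) ∧ ∀ i, ω (σ i) (σ (i + 1)) ≤ α := by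
  have hT : 0 ≤ T := hs.trans (hst.trans htT)
  have hτ := greedyTau_monotone (ω := ω) (α := α) hT
  refine ⟨fun i => max s (min (greedyTau ω α 0 T i) t), ?_, ?_, ?_, ?_, fun i => ?_⟩
  · simp [greedyTau, hs]
  · simp [greedyTau_greedyN_succ hω le_rfl hT le_rfl hα, hst, htT]
  · exact fun i j hij => max_le_max le_rfl (min_le_min_right t (hτ hij))
  · exact fun i => ⟨le_max_left _ _, max_le hst (min_le_right _ _)⟩
  · exact (hω.apply_clamp_le hs hst htT (le_greedyTau hT i) (hτ (Nat.le_succ i))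
      (greedyTau_le hT _)).trans (apply_greedyTau_succ_le hω le_rfl hT le_rfl hα.le i)

section remainder

variable {𝕜 ι E F : Type*} [NontriviallyNormedField 𝕜] [NormedAddCommGroup E] [NormedSpace 𝕜 E]
  [NormedAddCommGroup F] [NormedSpace 𝕜 F] (V : F → E →L[𝕜] F) (Z : ι → E) (y : ι → F)

def remainder (s t : ι) : F :=
  y t - y s - V (y s) (Z t - Z s)

lemma remainder_self (s : ι) : remainder V Z y s s = 0 := by
  simp [remainder]

lemma remainder_eq_add (s u t : ι) :
    remainder V Z y s t =
      remainder V Z y s u + remainder V Z y u t + (V (y u) - V (y s)) (Z t - Z u) := by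
  simp only [remainder, sub_apply, map_sub]
  abel

variable {V} {K : NNReal}

lemma norm_remainder_le_add (hV : LipschitzWith K V) (s u t : ι) :
    ‖remainder V Z y s t‖ ≤
      ‖remainder V Z y s u‖ + ‖remainder V Z y u t‖ + K * ‖y u - y s‖ * ‖Z t - Z u‖ := by
  have hVu : ‖V (y u) - V (y s)‖ ≤ K * ‖y u - y s‖ := by
    simpa only [dist_eq_norm] using hV.dist_le_mul (y u) (y s)
  calc ‖remainder V Z y s t‖
      ≤ ‖remainder V Z y s u‖ + ‖remainder V Z y u t‖ + ‖(V (y u) - V (y s)) (Z t - Z u)‖ := by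
        rw [remainder_eq_add V Z y s u t]; exact norm_add₃_le
    _ ≤ ‖remainder V Z y s u‖ + ‖remainder V Z y u t‖ + K * ‖y u - y s‖ * ‖Z t - Z u‖ := by
        gcongr
        exact ((V (y u) - V (y s)).le_opNorm _).trans (by gcongr)

lemma norm_remainder_le_of_chain (hV : LipschitzWith K V) {s : ι} {σ : ℕ → ι} {B : ℝ}
    (hσ0 : σ 0 = s)
    (hstep : ∀ i, ‖remainder V Z y (σ i) (σ (i + 1))‖ +
      K * ‖y (σ i) - y s‖ * ‖Z (σ (i + 1)) - Z (σ i)‖ ≤ B) (m : ℕ) :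
    ‖remainder V Z y s (σ m)‖ ≤ m * B := by
  induction m with
  | zero => simp [hσ0, remainder_self]
  | succ m ih =>
    have := norm_remainder_le_add Z y hV s (σ m) (σ (m + 1))
    push_cast
    linarith [hstep m]

end remainder

lemma norm_remainder_add_mul_le {T p α c : ℝ} {ω : ℝ → ℝ → ℝ} (hω : IsControl T ω)
    (hp : 0 ≤ p) (hc : 0 ≤ c) {E F : Type*} [NormedAddCommGroup E] [NormedSpace ℝ E]
    [NormedAddCommGroup F] [NormedSpace ℝ F] {V : F → E →L[ℝ] F} {Z : ℝ → E} {y : ℝ → F}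
    (hZ : ∀ s t, 0 ≤ s → s ≤ t → t ≤ T → ‖Z t - Z s‖ ≤ ω s t ^ (1 / p))
    (hy : ∀ s t, 0 ≤ s → s ≤ t → t ≤ T → ‖y t - y s‖ ≤ ω s t ^ (1 / p))
    (hloc : ∀ s t, 0 ≤ s → s ≤ t → t ≤ T → ω s t ≤ α →
      ‖remainder V Z y s t‖ ≤ c * ω s t ^ (2 / p))
    {s u v t : ℝ} (hs : 0 ≤ s) (hsu : s ≤ u) (huv : u ≤ v) (hvt : v ≤ t) (htT : t ≤ T)
    (huvα : ω u v ≤ α) :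
    ‖remainder V Z y u v‖ + ‖y u - y s‖ * ‖Z v - Z u‖ ≤ (c + 1) * ω s t ^ (2 / p) := by
  have hu : 0 ≤ u := hs.trans hsu
  have hvT : v ≤ T := hvt.trans htT
  have huT : u ≤ T := huv.trans hvT
  have hωuv : ω u v ^ (1 / p) ≤ ω s t ^ (1 / p) := by
    gcongr
    exacts [hω.nonneg hu huv hvT, hω.mono hs hsu huv hvt htT]
  have hωsu : ω s u ^ (1 / p) ≤ ω s t ^ (1 / p) := by
    gcongr
    exacts [hω.nonneg hs hsu huT, hω.mono hs le_rfl hsu (huv.trans hvt) htT]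
  have hR : ‖remainder V Z y u v‖ ≤ c * ω s t ^ (2 / p) := by
    refine (hloc u v hu huv hvT huvα).trans ?_
    gcongr
    exacts [hω.nonneg hu huv hvT, hω.mono hs hsu huv hvt htT]
  have hst : 0 ≤ ω s t := hω.nonneg hs (hsu.trans (huv.trans hvt)) htT
  have hcross : ‖y u - y s‖ * ‖Z v - Z u‖ ≤ ω s t ^ (2 / p) :=
    calc ‖y u - y s‖ * ‖Z v - Z u‖ ≤ ω s t ^ (1 / p) * ω s t ^ (1 / p) :=
          mul_le_mul ((hy s u hs hsu huT).trans hωsu) ((hZ u v hu huv hvT).trans hωuv)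
            (norm_nonneg _) (Real.rpow_nonneg hst _)
      _ = ω s t ^ (2 / p) := by
          rw [← Real.rpow_add_of_nonneg hst (by positivity) (by positivity)]
          ring_nf
  linarith

theorem remainder_global_bound_general
    (T p α : ℝ) (hp2 : 2 ≤ p) (hα : 0 < α)
    (e n : ℕ)
    (ω : ℝ → ℝ → ℝ) (hω : IsControl T ω)
    (Z : ℝ → EuclideanSpace ℝ (Fin e)) (y : ℝ → EuclideanSpace ℝ (Fin n))
    (V : EuclideanSpace ℝ (Fin n) →
      (EuclideanSpace ℝ (Fin e) →L[ℝ] EuclideanSpace ℝ (Fin n)))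
    (hV : LipschitzWith 1 V)
    (hZ : ∀ s t, 0 ≤ s → s ≤ t → t ≤ T → ‖Z t - Z s‖ ≤ ω s t ^ (1 / p))
    (hy : ∀ s t, 0 ≤ s → s ≤ t → t ≤ T → ‖y t - y s‖ ≤ ω s t ^ (1 / p))
    (c : ℝ) (hc : 0 ≤ c)
    (hloc : ∀ s t, 0 ≤ s → s ≤ t → t ≤ T → ω s t ≤ α →
      ‖y t - y s - V (y s) (Z t - Z s)‖ ≤ c * ω s t ^ (2 / p)) :
    ∀ s t, 0 ≤ s → s ≤ t → t ≤ T →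
      ‖y t - y s - V (y s) (Z t - Z s)‖
        ≤ (c + 1) * ((greedyN ω α 0 T : ℝ) + 2) * ω s t ^ (2 / p) := by
  intro s t hs hst htT
  obtain ⟨σ, hσ0, hσN, hσ, hσst, hσα⟩ := hω.exists_chain_apply_le hα hs hst htT
  have hstep (i : ℕ) : ‖remainder V Z y (σ i) (σ (i + 1))‖ +
      (1 : NNReal) * ‖y (σ i) - y s‖ * ‖Z (σ (i + 1)) - Z (σ i)‖ ≤
        (c + 1) * ω s t ^ (2 / p) := by
    rw [NNReal.coe_one, one_mul]
    exact norm_remainder_add_mul_le hω (by linarith) hc hZ hy hloc hs (hσst i).1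
      (hσ (Nat.le_succ i)) (hσst (i + 1)).2 htT (hσα i)
  have hchain := norm_remainder_le_of_chain Z y hV hσ0 hstep (greedyN ω α 0 T + 1)
  rw [hσN] at hchain
  refine hchain.trans ?_
  have hE : 0 ≤ ω s t ^ (2 / p) := Real.rpow_nonneg (hω.nonneg hs hst htT) _
  push_cast
  nlinarith

/-- key step of Lemma `lemma:rem_RDE_sol` of the paper: a local
bound `|R_{s,t}| ≤ c·ω(s,t)^{2/p}`, valid whenever `ω(s,t) ≤ α`, for the remainder
`R_{s,t} = y_{s,t} − V(y_s)Z_{s,t}` of a controlled path propagates to the global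
bound `|R_{s,t}| ≤ (c+1)(N_α(ω;[0,T]) + 2)·ω(s,t)^{2/p}`. -/
theorem remainder_global_bound
    (T p α : ℝ) (hT : 0 < T) (hp2 : 2 ≤ p) (hp3 : p < 3) (hα : 0 < α)
    (e n : ℕ)
    (ω : ℝ → ℝ → ℝ) (hω : IsControl T ω)
    (Z : ℝ → EuclideanSpace ℝ (Fin e)) (y : ℝ → EuclideanSpace ℝ (Fin n))
    (V : EuclideanSpace ℝ (Fin n) →
      (EuclideanSpace ℝ (Fin e) →L[ℝ] EuclideanSpace ℝ (Fin n)))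
    (hV : LipschitzWith 1 V)
    (hZ : ∀ s t, 0 ≤ s → s ≤ t → t ≤ T → ‖Z t - Z s‖ ≤ ω s t ^ (1 / p))
    (hy : ∀ s t, 0 ≤ s → s ≤ t → t ≤ T → ‖y t - y s‖ ≤ ω s t ^ (1 / p))
    (c : ℝ) (hc : 0 ≤ c)
    (hloc : ∀ s t, 0 ≤ s → s ≤ t → t ≤ T → ω s t ≤ α →
      ‖y t - y s - V (y s) (Z t - Z s)‖ ≤ c * ω s t ^ (2 / p)) :
    ∀ s t, 0 ≤ s → s ≤ t → t ≤ T →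
      ‖y t - y s - V (y s) (Z t - Z s)‖
        ≤ (c + 1) * ((greedyN ω α 0 T : ℝ) + 2) * ω s t ^ (2 / p) :=
  remainder_global_bound_general T p α hp2 hα e n ω hω Z y V hV hZ hy c hc hloc
end
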